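/- arXiv:2304.06918 — 7 statements merged into one kernel-verified Lean document; each statement's English description precedes it below -/
import Mathlib

section
/- Let R be a commutative noetherian ring and M a finitely generated R-module. If for every f ∈ R the localization M_f is a torsionfree R_f-module, then Ass M ⊆ Ass R. -/
open Submodule

section AssFinite

variable {R : Type*} [CommRing R] {M : Type*} [AddCommGroup M] [Module R M]

lemma ass_subset_union_aux (K : Submodule R M) :
    associatedPrimes R M ⊆ associatedPrimes R K ∪ associatedPrimes R (M ⧸ K) := by
  exact associatedPrimes.subset_union_of_exact K.injective_subtype (LinearMap.exact_subtype_mkQ K)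

lemma ass_finite_quot [IsNoetherianRing R] [Module.Finite R M] (N : Submodule R M) :
    (associatedPrimes R (M ⧸ N)).Finite := by
  by_contra hcon0
  have hne : ({N' : Submodule R M | ¬ (associatedPrimes R (M ⧸ N')).Finite}).Nonempty :=
    ⟨N, hcon0⟩
  obtain ⟨N, hN, hmax⟩ := (set_has_maximal_iff_noetherian.mpr inferInstance) _ hne
  have hNt : N ≠ ⊤ := by
    rintro rfl
    have : Subsingleton (M ⧸ (⊤ : Submodule R M)) :=
      Submodule.Quotient.subsingleton_iff.mpr rfl
    exact hN (by rw [associatedPrimes.eq_empty_of_subsingleton]; exact Set.finite_empty)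
  have : Nontrivial (M ⧸ N) := Submodule.Quotient.nontrivial_iff.mpr hNt
  obtain ⟨p, hp⟩ := associatedPrimes.nonempty R (M ⧸ N)
  obtain ⟨hp1, xb, hxb⟩ := isAssociatedPrime_iff.mp hp
  rw [Submodule.bot_colon'] at hxb
  obtain ⟨x, rfl⟩ := Submodule.Quotient.mk_surjective N xb
  have hx0 : (Submodule.Quotient.mk x : M ⧸ N) ≠ 0 := by
    intro hzero
    exact hp1.ne_top (by rw [hxb, hzero, span_zero_singleton, annihilator_bot])
  have hxN : x ∉ N := fun hmem => hx0 ((Submodule.Quotient.mk_eq_zero N).mpr hmem)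
  set N' : Submodule R M := N ⊔ R ∙ x with hN'def
  have hle : N ≤ N' := le_sup_left
  have hlt : N < N' :=
    lt_of_le_of_ne hle (fun e => hxN (by rw [e]; exact mem_sup_right (mem_span_singleton_self x)))
  have hfin' : (associatedPrimes R (M ⧸ N')).Finite := by
    by_contra hf
    exact hmax N' hf hlt
  apply hN
  have hsub := ass_subset_union_aux (R ∙ (Submodule.Quotient.mk x : M ⧸ N))
  refine Set.Finite.subset (Set.Finite.union ?_ ?_) hsub
  · have hker : LinearMap.ker (LinearMap.toSpanSingleton R (M ⧸ N) (Submodule.Quotient.mk x)) = p := by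
      ext b
      rw [LinearMap.mem_ker, LinearMap.toSpanSingleton_apply, hxb,
        mem_annihilator_span_singleton]
    have e1 : (R ⧸ p) ≃ₗ[R] ↥(R ∙ (Submodule.Quotient.mk x : M ⧸ N)) :=
      (Submodule.quotEquivOfEq _ _ hker.symm).trans
        ((LinearMap.toSpanSingleton R (M ⧸ N) (Submodule.Quotient.mk x)).quotKerEquivRange.trans
          (LinearEquiv.ofEq _ _
            (LinearMap.span_singleton_eq_range R (M ⧸ N) (Submodule.Quotient.mk x)).symm))
    rw [← LinearEquiv.AssociatedPrimes.eq e1,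
      associatedPrimes.eq_singleton_of_isPrimary hp1.isPrimary]
    exact Set.finite_singleton _
  · have h1 : Submodule.map N.mkQ N = ⊥ := by
      apply le_bot_iff.mp
      rintro y ⟨z, hz, rfl⟩
      simpa using (Submodule.Quotient.mk_eq_zero N).mpr hz
    have hmap : (R ∙ (Submodule.Quotient.mk x : M ⧸ N)) = Submodule.map N.mkQ N' := by
      rw [hN'def, Submodule.map_sup, h1, bot_sup_eq, Submodule.map_span, Set.image_singleton]
      simp [Submodule.mkQ_apply]
    have e2 : ((M ⧸ N) ⧸ (R ∙ (Submodule.Quotient.mk x : M ⧸ N))) ≃ₗ[R] M ⧸ N' :=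
      (Submodule.quotEquivOfEq _ _ hmap).trans
        (Submodule.quotientQuotientEquivQuotient N N' hle)
    rw [LinearEquiv.AssociatedPrimes.eq e2]
    exact hfin'

lemma ass_finite [IsNoetherianRing R] [Module.Finite R M] :
    (associatedPrimes R M).Finite := by
  have hfin := ass_finite_quot (R := R) (M := M) ⊥
  rwa [LinearEquiv.AssociatedPrimes.eq (Submodule.quotEquivOfEqBot ⊥ rfl)] at hfin

end AssFinite

section Main

variable {R : Type*} [CommRing R]

def auxN (f : R) : Ideal R where
  carrier := {r | ∃ n : ℕ, f ^ n * r = 0}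
  add_mem' := by
    rintro a b ⟨n, hn⟩ ⟨m, hm⟩
    refine ⟨n + m, ?_⟩
    have h1 : f ^ (n + m) * a = f ^ m * (f ^ n * a) := by ring
    have h2 : f ^ (n + m) * b = f ^ n * (f ^ m * b) := by ring
    rw [mul_add, h1, h2, hn, hm, mul_zero, mul_zero, add_zero]
  zero_mem' := ⟨0, by rw [mul_zero]⟩
  smul_mem' := by
    rintro c a ⟨n, hn⟩
    exact ⟨n, by rw [smul_eq_mul, show f ^ n * (c * a) = c * (f ^ n * a) by ring, hn, mul_zero]⟩

lemma mem_auxN {f r : R} : r ∈ auxN f ↔ ∃ n : ℕ, f ^ n * r = 0 := Iff.rfl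

lemma mem_auxN_iff (f r : R) :
    r ∈ auxN f ↔ algebraMap R (Localization.Away f) r = 0 := by
  rw [IsLocalization.map_eq_zero_iff (Submonoid.powers f)]
  constructor
  · rintro ⟨n, hn⟩
    exact ⟨⟨f ^ n, (Submonoid.mem_powers_iff _ _).mpr ⟨n, rfl⟩⟩, hn⟩
  · rintro ⟨m, hm⟩
    obtain ⟨n, hn⟩ := (Submonoid.mem_powers_iff _ _).mp m.2
    exact ⟨n, by rw [hn]; exact hm⟩

lemma exists_ann_step (M : Type*) [AddCommGroup M] [Module R M] (f x : R) (m : M)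
    (h : ∀ a ∈ nonZeroDivisors (Localization.Away f),
      Function.Injective fun y : LocalizedModule (Submonoid.powers f) M => a • y)
    (hm0 : LocalizedModule.mk m (1 : Submonoid.powers f) ≠ 0) (hx : x • m = 0) :
    ∃ r : R, r ∉ auxN f ∧ x * r ∈ auxN f := by
  set a := algebraMap R (Localization.Away f) x with ha
  have hnz : a ∉ nonZeroDivisors (Localization.Away f) := by
    intro hA
    apply hm0
    have e : a • LocalizedModule.mk m (1 : Submonoid.powers f) = 0 := by
      rw [ha, algebraMap_smul, LocalizedModule.smul'_mk, hx, LocalizedModule.zero_mk]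
    refine h a hA ?_
    show a • LocalizedModule.mk m (1 : Submonoid.powers f)
      = a • (0 : LocalizedModule (Submonoid.powers f) M)
    rw [e, smul_zero]
  rw [mem_nonZeroDivisors_iff_right] at hnz
  push_neg at hnz
  obtain ⟨z, hz1, hz2⟩ := hnz
  obtain ⟨⟨r, s⟩, hrs⟩ := IsLocalization.mk'_surjective (Submonoid.powers f) z
  dsimp only at hrs
  have hs : IsUnit (algebraMap R (Localization.Away f) (s : R)) :=
    IsLocalization.map_units _ s
  have hspec : IsLocalization.mk' (Localization.Away f) r s * algebraMap R _ (s : R)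
      = algebraMap R _ r := IsLocalization.mk'_spec _ r s
  refine ⟨r, ?_, ?_⟩
  · intro hr
    rw [mem_auxN_iff] at hr
    apply hz2
    rw [← hrs]
    exact (IsUnit.mul_left_eq_zero hs).mp (by rw [hspec, hr])
  · rw [mem_auxN_iff, map_mul]
    have hrz : algebraMap R (Localization.Away f) r = z * algebraMap R _ (s : R) := by
      rw [← hspec, hrs]
    rw [hrz, ← mul_assoc, mul_comm a z, hz1, zero_mul]

end Main

/-- If `R` is noetherian, `M` finitely generated, and `M_f` is a torsionfree `R_f`-module
for every `f ∈ R`, then `Ass M ⊆ Ass R`. -/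
theorem associatedPrimes_subset_of_localization_away_torsionfree
    (R : Type) [CommRing R] [IsNoetherianRing R]
    (M : Type) [AddCommGroup M] [Module R M] [Module.Finite R M]
    (h : ∀ f : R, ∀ a ∈ nonZeroDivisors (Localization.Away f),
      Function.Injective fun m : LocalizedModule (Submonoid.powers f) M => a • m) :
    associatedPrimes R M ⊆ associatedPrimes R R := by
  rintro p hpa
  obtain ⟨hp1, m, hm⟩ := isAssociatedPrime_iff.mp hpa
  rw [Submodule.bot_colon'] at hm
  classical
  have hone : (1 : R) ∉ p := fun h1 => hp1.ne_top ((Ideal.eq_top_iff_one p).mpr h1)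
  obtain ⟨I, ⟨f, hfp, rfl⟩, hImax⟩ :=
    (set_has_maximal_iff_noetherian.mpr inferInstance)
      {I : Ideal R | ∃ g, g ∉ p ∧ I = auxN g} ⟨auxN 1, 1, hone, rfl⟩
  have hNmono : ∀ g : R, auxN f ≤ auxN (f * g) := by
    rintro g r ⟨n, hn⟩
    exact ⟨n, by rw [mul_pow, show f ^ n * g ^ n * r = g ^ n * (f ^ n * r) by ring, hn, mul_zero]⟩
  have hNeq : ∀ g, g ∉ p → auxN (f * g) = auxN f := by
    intro g hg
    by_contra hne
    have hfg : f * g ∉ p := fun hin => (hp1.mem_or_mem hin).elim hfp hg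
    exact hImax (auxN (f * g)) ⟨f * g, hfg, rfl⟩ (lt_of_le_of_ne (hNmono g) (Ne.symm hne))
  have keyA : ∀ r : R, r ∉ auxN f → ∀ g, g * r ∈ auxN f → g ∈ p := by
    intro r hr g hgr
    by_contra hgp
    apply hr
    rw [← hNeq g hgp]
    obtain ⟨n, hn⟩ := hgr
    refine ⟨n + 1, ?_⟩
    rw [mul_pow, show f ^ (n + 1) * g ^ (n + 1) * r = f * g ^ n * (f ^ n * (g * r)) by ring,
      hn, mul_zero]
  have hm0 : LocalizedModule.mk m (1 : Submonoid.powers f) ≠ 0 := by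
    intro e
    have he : LocalizedModule.mk m (1 : Submonoid.powers f)
        = LocalizedModule.mk 0 (1 : Submonoid.powers f) := by
      rw [e, LocalizedModule.zero_mk]
    obtain ⟨u, hu⟩ := LocalizedModule.mk_eq.mp he
    simp only [one_smul, smul_zero] at hu
    obtain ⟨n, hn⟩ := (Submonoid.mem_powers_iff _ _).mp u.2
    have hu' : (u : R) • m = 0 := hu
    have hfn : f ^ n ∈ p := by
      rw [hm, Submodule.mem_annihilator_span_singleton, hn]
      exact hu'
    exact hfp (hp1.mem_of_pow_mem n hfn)
  have keyB : ∀ x ∈ p, ∃ r, r ∉ auxN f ∧ x * r ∈ auxN f := by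
    intro x hx
    have hxm : x • m = 0 := by
      have := hm ▸ hx
      rwa [Submodule.mem_annihilator_span_singleton] at this
    exact exists_ann_step M f x m (h f) hm0 hxm
  have hWfin : (associatedPrimes R (R ⧸ auxN f)).Finite := ass_finite
  have hcover : (p : Set R) ⊆ ⋃ P ∈ associatedPrimes R (R ⧸ auxN f), (P : Set R) := by
    intro x hx
    rw [biUnion_associatedPrimes_eq_zero_divisors]
    obtain ⟨r, hr1, hr2⟩ := keyB x hx
    refine ⟨Submodule.Quotient.mk r, ?_, ?_⟩
    · rwa [Ne, Submodule.Quotient.mk_eq_zero]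
    · rw [← Submodule.Quotient.mk_smul]
      exact (Submodule.Quotient.mk_eq_zero _).mpr (by rwa [smul_eq_mul])
  have hsubexists : ∃ P ∈ hWfin.toFinset, p ≤ P := by
    rw [← Ideal.subset_union_prime (f := fun I : Ideal R => I) p p
      (fun P hP _ _ => (hWfin.mem_toFinset.mp hP).isPrime)]
    intro x hx
    have := hcover hx
    simpa [hWfin.coe_toFinset] using this
  obtain ⟨P, hPs, hpP⟩ := hsubexists
  obtain ⟨hP1, w, hw⟩ := isAssociatedPrime_iff.mp (hWfin.mem_toFinset.mp hPs)
  rw [Submodule.bot_colon'] at hw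
  obtain ⟨r, rfl⟩ := Submodule.Quotient.mk_surjective _ w
  have hrN : r ∉ auxN f := by
    intro hr
    apply hP1.ne_top
    rw [hw, (Submodule.Quotient.mk_eq_zero _).mpr hr, Submodule.span_zero_singleton,
      Submodule.annihilator_bot]
  obtain ⟨T, hT⟩ := (IsNoetherian.noetherian p : p.FG)
  have hsel : ∀ t ∈ T, ∃ kk : ℕ, f ^ kk * (t * r) = 0 := by
    intro t ht
    have htp : t ∈ p := hT ▸ Submodule.subset_span ht
    have htP : t ∈ P := hpP htp
    rw [hw, Submodule.mem_annihilator_span_singleton, ← Submodule.Quotient.mk_smul,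
      smul_eq_mul] at htP
    exact (Submodule.Quotient.mk_eq_zero _).mp htP
  choose! k hk using hsel
  set Nn := T.sup k with hNn
  set r' := f ^ Nn * r with hr'
  have hkill : ∀ t ∈ T, t * r' = 0 := by
    intro t ht
    have hlek : k t ≤ Nn := Finset.le_sup ht
    have heq : t * r' = f ^ (Nn - k t) * (f ^ (k t) * (t * r)) := by
      rw [hr', show f ^ (Nn - k t) * (f ^ (k t) * (t * r))
        = f ^ (Nn - k t) * f ^ (k t) * (t * r) by ring, ← pow_add, Nat.sub_add_cancel hlek]
      ring
    rw [heq, hk t ht, mul_zero]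
  refine isAssociatedPrime_iff.mpr ⟨hp1, r', ?_⟩
  rw [Submodule.bot_colon']
  apply le_antisymm
  · rw [← hT, Submodule.span_le]
    intro t ht
    rw [SetLike.mem_coe, Submodule.mem_annihilator_span_singleton, smul_eq_mul]
    exact hkill t ht
  · intro y hy
    rw [Submodule.mem_annihilator_span_singleton, smul_eq_mul] at hy
    have hyr : (y * f ^ Nn) * r ∈ auxN f :=
      ⟨0, by rw [pow_zero, one_mul, show y * f ^ Nn * r = y * (f ^ Nn * r) by ring, ← hr', hy]⟩
    have hyp := keyA r hrN (y * f ^ Nn) hyr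
    rcases hp1.mem_or_mem hyp with hmem | hmem
    · exact hmem
    · exact absurd (hp1.mem_of_pow_mem _ hmem) hfp
end

section
/- Let R be a commutative noetherian ring, X a torsionfree class of finitely generated R-modules, and p a prime such that R/p ∈ X. Then every finitely generated R-module M with Ass M = {p} belongs to X. -/
/-- Let `R` be commutative noetherian, `X` a torsionfree class of finitely generated
`R`-modules and `p` a prime with `R/p ∈ X`. Then every finitely generated `R`-module `M`
with `Ass M = {p}` belongs to `X`. -/
theorem mem_of_ass_singleton (R : Type) [CommRing R] [IsNoetherianRing R]
    (X : ∀ (M : Type) [AddCommGroup M] [Module R M], Prop)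
    (hfg : ∀ (M : Type) [AddCommGroup M] [Module R M], X M → Module.Finite R M)
    (hiso : ∀ (M N : Type) [AddCommGroup M] [Module R M] [AddCommGroup N] [Module R N],
      (M ≃ₗ[R] N) → X M → X N)
    (hsub : ∀ (M : Type) [AddCommGroup M] [Module R M] (N : Submodule R M), X M → X ↥N)
    (hext : ∀ (A B C : Type) [AddCommGroup A] [Module R A] [AddCommGroup B] [Module R B]
        [AddCommGroup C] [Module R C] (f : A →ₗ[R] B) (g : B →ₗ[R] C),
      Function.Injective f → Function.Surjective g → Function.Exact f g → X A → X C → X B)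
    (p : Ideal R) (hp : p.IsPrime) (hpX : X (R ⧸ p))
    (M : Type) [AddCommGroup M] [Module R M] [Module.Finite R M]
    (hM : associatedPrimes R M = {p}) :
    X M := by
  classical
  -- every module isomorphic to a submodule of a member of `X` is in `X`
  have hinj : ∀ (A B : Type) [AddCommGroup A] [Module R A] [AddCommGroup B] [Module R B]
      (f : A →ₗ[R] B), Function.Injective f → X B → X A := by
    intro A B _ _ _ _ f hf hB
    exact hiso ↥(LinearMap.range f) A (LinearEquiv.ofInjective f hf).symm (hsub B _ hB)
  -- the zero module is in `X`
  have hbot : ∀ (A : Type) [AddCommGroup A] [Module R A], Subsingleton A → X A := by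
    intro A _ _ hA
    refine hinj A (R ⧸ p) 0 (fun a b _ => Subsingleton.elim a b) hpX
  -- Step 1 : every finite clean module killed by `p` is in `X`.
  have lemB : ∀ (K : Type) [AddCommGroup K] [Module R K] [IsNoetherian R K],
      (∀ z : K, ∀ b ∈ p, b • z = 0) →
      (∀ z : K, z ≠ 0 → ∀ r : R, r • z = 0 → r ∈ p) →
      X K := by
    intro K _ _ _ hkill hcleanK
    have main : ∀ N : Submodule R K,
        (∀ z : K ⧸ N, z ≠ 0 → ∀ r : R, r • z = 0 → r ∈ p) → X (K ⧸ N) := by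
      intro N
      induction N using IsNoetherian.induction with
      | _ N ih =>
      intro hclean
      by_cases htriv : Subsingleton (K ⧸ N)
      · exact hbot _ htriv
      have : Nontrivial (K ⧸ N) := not_subsingleton_iff_nontrivial.mp htriv
      obtain ⟨x₀, hx₀⟩ := exists_ne (0 : K ⧸ N)
      -- the quotient is killed by p
      have hkillQ : ∀ z : K ⧸ N, ∀ b ∈ p, b • z = 0 := by
        intro z b hb
        obtain ⟨w, rfl⟩ := Submodule.Quotient.mk_surjective N z
        rw [← Submodule.Quotient.mk_smul, hkill w b hb, Submodule.Quotient.mk_zero]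
      have hann : ∀ r : R, r • x₀ = 0 ↔ r ∈ p :=
        fun r => ⟨fun h => hclean x₀ hx₀ r h, fun h => hkillQ x₀ r h⟩
      -- T = the cyclic submodule generated by x₀, isomorphic to R/p
      set l : R →ₗ[R] (K ⧸ N) := LinearMap.toSpanSingleton R (K ⧸ N) x₀ with hl
      have hker : LinearMap.ker l = p := by
        ext r
        rw [LinearMap.mem_ker, hl, LinearMap.toSpanSingleton_apply, hann]
      set T : Submodule R (K ⧸ N) := LinearMap.range l with hT
      have XT : X ↥T :=
        hiso _ _ ((Submodule.quotEquivOfEq p (LinearMap.ker l) hker.symm).trans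
          l.quotKerEquivRange) hpX
      -- K₁ = saturation of T
      set K₁ : Submodule R (K ⧸ N) :=
        { carrier := {z | ∃ a : R, a ∉ p ∧ a • z ∈ T}
          zero_mem' := ⟨1, by simpa using (Ideal.ne_top_iff_one p).mp hp.ne_top,
            by simpa using T.zero_mem⟩
          add_mem' := by
            rintro z w ⟨a, ha, haT⟩ ⟨b, hb, hbT⟩
            refine ⟨a * b, fun h => ((hp.mul_mem_iff_mem_or_mem.mp h).elim ha hb), ?_⟩
            have : (a * b) • (z + w) = b • (a • z) + a • (b • w) := by
              rw [smul_add]; rw [← mul_smul, ← mul_smul, mul_comm]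
            rw [this]
            exact T.add_mem (T.smul_mem _ haT) (T.smul_mem _ hbT)
          smul_mem' := by
            rintro r z ⟨a, ha, haT⟩
            exact ⟨a, ha, by rw [smul_comm]; exact T.smul_mem _ haT⟩ } with hK₁
      have hx₀T : x₀ ∈ T := ⟨1, by simp [hl]⟩
      have hx₀K₁ : x₀ ∈ K₁ :=
        ⟨1, by simpa using (Ideal.ne_top_iff_one p).mp hp.ne_top, by simpa using hx₀T⟩
      -- common denominator for K₁
      obtain ⟨S, hS⟩ := (IsNoetherian.noetherian K₁ : K₁.FG)
      have hmemS : ∀ z ∈ S, z ∈ K₁ := fun z hz => hS ▸ Submodule.subset_span hz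
      set g : (K ⧸ N) → R := fun z =>
        if h : ∃ a : R, a ∉ p ∧ a • z ∈ T then h.choose else 1 with hg
      have hg1 : ∀ z ∈ K₁, g z ∉ p ∧ (g z) • z ∈ T := by
        intro z hz
        have hz' : ∃ a : R, a ∉ p ∧ a • z ∈ T := hz
        simpa [hg, dif_pos hz'] using hz'.choose_spec
      set a : R := ∏ z ∈ S, g z with hadef
      have haP : a ∉ p := by
        intro h
        rw [hadef] at h
        haveI := hp
        obtain ⟨z, hzS, hzp⟩ := Ideal.IsPrime.prod_mem_iff.mp h
        exact (hg1 z (hmemS z hzS)).1 hzp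
      have haT : ∀ z ∈ K₁, a • z ∈ T := by
        intro z hz
        rw [← hS] at hz
        induction hz using Submodule.span_induction with
        | mem z hzS =>
          have := Finset.mul_prod_erase S g hzS
          rw [hadef, ← this, mul_comm, mul_smul]
          exact T.smul_mem _ (hg1 z (hmemS z hzS)).2
        | zero => simpa using T.zero_mem
        | add y w _ _ hy hw => rw [smul_add]; exact T.add_mem hy hw
        | smul r y _ hy => rw [smul_comm]; exact T.smul_mem _ hy
      -- K₁ embeds into T
      set φ : ↥K₁ →ₗ[R] ↥T :=
        LinearMap.codRestrict T (a • K₁.subtype) (fun z => haT z z.2) with hφ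
      have hφinj : Function.Injective φ := by
        intro z w h
        have h' : a • (z : K ⧸ N) = a • (w : K ⧸ N) := congrArg Subtype.val h
        by_contra hne
        have hzw : (z : K ⧸ N) - w ≠ 0 := by
          intro h0
          exact hne (Subtype.ext (sub_eq_zero.mp h0))
        have : a • ((z : K ⧸ N) - w) = 0 := by rw [smul_sub, h', sub_self]
        exact haP (hclean _ hzw a this)
      have XK₁ : X ↥K₁ := hinj _ _ φ hφinj XT
      -- the quotient (K ⧸ N) ⧸ K₁ is a smaller quotient of K
      set N' : Submodule R K := K₁.comap N.mkQ with hN'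
      have hNle : N ≤ N' := by
        intro z hz
        have : N.mkQ z = 0 := (Submodule.Quotient.mk_eq_zero N).mpr hz
        simp only [hN', Submodule.mem_comap, this]
        exact K₁.zero_mem
      have hNlt : N < N' := by
        refine lt_of_le_of_ne hNle ?_
        intro h
        obtain ⟨x, hx⟩ := Submodule.Quotient.mk_surjective N x₀
        have hxN' : x ∈ N' := by
          simp only [hN', Submodule.mem_comap]
          show N.mkQ x ∈ K₁
          rw [show N.mkQ x = x₀ from hx]
          exact hx₀K₁
        rw [← h] at hxN'
        exact hx₀ (by rw [← hx]; exact (Submodule.Quotient.mk_eq_zero N).mpr hxN')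
      have hcleanN' : ∀ z : K ⧸ N', z ≠ 0 → ∀ r : R, r • z = 0 → r ∈ p := by
        intro z hz r hrz
        obtain ⟨w, rfl⟩ := Submodule.Quotient.mk_surjective N' z
        by_contra hrp
        have hrw : r • w ∈ N' := by
          rw [← Submodule.Quotient.mk_eq_zero N']
          simpa using hrz
        have hwN' : w ∈ N' := by
          simp only [hN', Submodule.mem_comap] at hrw ⊢
          obtain ⟨b, hb, hbT⟩ := hrw
          refine ⟨b * r, fun h => ((hp.mul_mem_iff_mem_or_mem.mp h).elim hb hrp), ?_⟩
          rw [mul_smul, ← map_smul]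
          exact hbT
        exact hz ((Submodule.Quotient.mk_eq_zero N').mpr hwN')
      have XKN' : X (K ⧸ N') := ih N' hNlt hcleanN'
      have hmap : Submodule.map N.mkQ N' = K₁ :=
        Submodule.map_comap_eq_of_surjective (Submodule.Quotient.mk_surjective N) K₁
      have XQQ : X ((K ⧸ N) ⧸ K₁) := by
        rw [← hmap]
        exact hiso _ _ (Submodule.quotientQuotientEquivQuotient N N' hNle).symm XKN'
      exact hext ↥K₁ (K ⧸ N) ((K ⧸ N) ⧸ K₁) K₁.subtype K₁.mkQ
        (Submodule.injective_subtype K₁) (Submodule.Quotient.mk_surjective K₁)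
        (LinearMap.exact_subtype_mkQ K₁) XK₁ XQQ
    have hcleanbot : ∀ z : K ⧸ (⊥ : Submodule R K), z ≠ 0 → ∀ r : R, r • z = 0 → r ∈ p := by
      intro z hz r hrz
      obtain ⟨w, rfl⟩ := Submodule.Quotient.mk_surjective ⊥ z
      have hw : w ≠ 0 := fun h => hz (by rw [h, Submodule.Quotient.mk_zero])
      refine hcleanK w hw r ?_
      have : r • w ∈ (⊥ : Submodule R K) := by
        rw [← Submodule.Quotient.mk_eq_zero, Submodule.Quotient.mk_smul]
        exact hrz
      simpa using this
    exact hiso _ _ (Submodule.quotEquivOfEqBot (⊥ : Submodule R K) rfl) (main ⊥ hcleanbot)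
  -- Step 2 : every finite clean module killed by a power of `p` is in `X`.
  have lemP : ∀ n : ℕ, ∀ (K : Type) [AddCommGroup K] [Module R K] [IsNoetherian R K],
      (∀ z : K, ∀ c ∈ p ^ n, c • z = 0) →
      (∀ z : K, z ≠ 0 → ∀ r : R, r • z = 0 → r ∈ p) →
      X K := by
    intro n
    induction n with
    | zero =>
      intro K _ _ _ hkill _
      refine hbot K ⟨fun z w => ?_⟩
      have hz : z = 0 := by simpa using hkill z 1 (by simp [Ideal.one_eq_top])
      have hw : w = 0 := by simpa using hkill w 1 (by simp [Ideal.one_eq_top])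
      rw [hz, hw]
    | succ n ih =>
      intro K _ _ _ hkill hclean
      set K₁ : Submodule R K :=
        { carrier := {z | ∀ b ∈ p, b • z = 0}
          zero_mem' := fun b _ => smul_zero b
          add_mem' := by
            intro z w hz hw b hb
            rw [smul_add, hz b hb, hw b hb, add_zero]
          smul_mem' := by
            intro r z hz b hb
            rw [smul_comm, hz b hb, smul_zero] } with hK₁
      have XK₁ : X ↥K₁ := by
        refine lemB ↥K₁ (fun z b hb => ?_) (fun z hz r hrz => ?_)
        · exact Subtype.ext (z.2 b hb)
        · refine hclean (z : K) (fun h => hz (Subtype.ext h)) r ?_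
          exact congrArg Subtype.val hrz
      have hkillQ : ∀ z : K ⧸ K₁, ∀ c ∈ p ^ n, c • z = 0 := by
        intro z c hc
        obtain ⟨w, rfl⟩ := Submodule.Quotient.mk_surjective K₁ z
        rw [← Submodule.Quotient.mk_smul, Submodule.Quotient.mk_eq_zero]
        intro b hb
        rw [smul_smul, show b * c = c * b from mul_comm b c]
        exact hkill w (c * b) (by rw [pow_succ]; exact Ideal.mul_mem_mul hc hb)
      have hcleanQ : ∀ z : K ⧸ K₁, z ≠ 0 → ∀ r : R, r • z = 0 → r ∈ p := by
        intro z hz r hrz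
        obtain ⟨w, rfl⟩ := Submodule.Quotient.mk_surjective K₁ z
        by_contra hrp
        have hrw : r • w ∈ K₁ := by
          rw [← Submodule.Quotient.mk_eq_zero K₁, Submodule.Quotient.mk_smul]
          exact hrz
        have hwK₁ : w ∈ K₁ := by
          intro b hb
          by_contra hbw
          have : r • (b • w) = 0 := by rw [smul_comm]; exact hrw b hb
          exact hrp (hclean (b • w) hbw r this)
        exact hz ((Submodule.Quotient.mk_eq_zero K₁).mpr hwK₁)
      have XQ : X (K ⧸ K₁) := ih (K ⧸ K₁) hkillQ hcleanQ
      exact hext ↥K₁ K (K ⧸ K₁) K₁.subtype K₁.mkQ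
        (Submodule.injective_subtype K₁) (Submodule.Quotient.mk_surjective K₁)
        (LinearMap.exact_subtype_mkQ K₁) XK₁ XQ
  -- M is clean
  have hcleanM : ∀ z : M, z ≠ 0 → ∀ r : R, r • z = 0 → r ∈ p := by
    intro z hz r hrz
    obtain ⟨P, hP, hle⟩ := exists_le_isAssociatedPrime_of_isNoetherianRing R z hz
    have : P = p := by
      have : P ∈ associatedPrimes R M := hP
      rw [hM] at this
      exact this
    rw [← this]
    exact hle (Submodule.mem_colon_singleton.mpr (by rw [Submodule.mem_bot]; exact hrz))
  -- the p-power-torsion ladder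
  set f : ℕ →o Submodule R M :=
    { toFun := fun n =>
        { carrier := {z | ∀ c ∈ p ^ n, c • z = 0}
          zero_mem' := fun c _ => smul_zero c
          add_mem' := by
            intro z w hz hw c hc
            rw [smul_add, hz c hc, hw c hc, add_zero]
          smul_mem' := by
            intro r z hz c hc
            rw [smul_comm, hz c hc, smul_zero] }
      monotone' := by
        intro m n hmn z hz c hc
        exact hz c (Ideal.pow_le_pow_right hmn hc) } with hf
  obtain ⟨n, hn⟩ := monotone_stabilizes_iff_noetherian.mpr
    (isNoetherian_of_isNoetherianRing_of_finite R M) f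
  have hstab : f n = f (n + 1) := hn (n + 1) (Nat.le_succ n)
  -- the ladder reaches ⊤
  have htop : f n = ⊤ := by
    by_contra hne
    have hlt : f n < ⊤ := lt_top_iff_ne_top.mpr hne
    have : Nontrivial (M ⧸ f n) := Submodule.Quotient.nontrivial_iff.mpr hne
    obtain ⟨q, hq⟩ := associatedPrimes.nonempty R (M ⧸ f n)
    obtain ⟨hqprime, xb, hxb⟩ := (isAssociatedPrime_iff).mp hq
    have hxb0 : xb ≠ 0 := by
      intro h
      rw [h] at hxb
      rw [Submodule.bot_colon', show Submodule.span R {(0 : M ⧸ f n)} = ⊥ from Submodule.span_zero_singleton R,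
        Submodule.annihilator_bot] at hxb
      exact hqprime.ne_top hxb
    obtain ⟨x, hx⟩ := Submodule.Quotient.mk_surjective (f n) xb
    have hmemq : ∀ r : R, r ∈ q ↔ r • x ∈ f n := by
      intro r
      rw [hxb, Submodule.mem_colon_singleton, Submodule.mem_bot, ← hx,
        ← Submodule.Quotient.mk_smul, Submodule.Quotient.mk_eq_zero]
    have hxfn : x ∉ f n := by
      intro h
      exact hxb0 (by rw [← hx]; exact (Submodule.Quotient.mk_eq_zero _).mpr h)
    -- p ≤ q
    have hpq : p ≤ q := by
      by_cases hc : ∀ s ∈ p ^ n, s ∈ q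
      · intro b hb
        exact hqprime.mem_of_pow_mem n (hc _ (Ideal.pow_mem_pow hb n))
      · push_neg at hc
        obtain ⟨s, hs, hsq⟩ := hc
        have hq' : IsAssociatedPrime q M := by
          refine (isAssociatedPrime_iff).mpr ⟨hqprime, s • x, ?_⟩
          ext r
          rw [Submodule.mem_colon_singleton, Submodule.mem_bot]
          constructor
          · intro hr
            rw [smul_smul, mul_comm, mul_smul]
            have : r • x ∈ f n := (hmemq r).mp hr
            exact this s hs
          · intro hr
            have : (r * s) • x = 0 := by rw [mul_smul]; exact hr
            have hrs : r * s ∈ q := (hmemq (r * s)).mpr (by rw [this]; exact (f n).zero_mem)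
            exact (hqprime.mul_mem_iff_mem_or_mem.mp hrs).resolve_right hsq
        have : q ∈ associatedPrimes R M := hq'
        rw [hM] at this
        rw [this]
    -- then x ∈ f (n+1) = f n, contradiction
    have hxfn1 : x ∈ f (n + 1) := by
      intro c hc
      rw [pow_succ] at hc
      refine Submodule.mul_induction_on hc ?_ ?_
      · intro i hi b hb
        rw [mul_smul]
        have : b • x ∈ f n := (hmemq b).mp (hpq hb)
        exact this i hi
      · intro y z hy hz
        rw [add_smul, hy, hz, add_zero]
    rw [← hstab] at hxfn1
    exact hxfn hxfn1
  -- conclude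
  haveI : IsNoetherian R M := isNoetherian_of_isNoetherianRing_of_finite R M
  refine lemP n M (fun z c hc => ?_) hcleanM
  have hz : z ∈ f n := by rw [htop]; trivial
  exact hz c hc
end

section
/- Let R be a commutative noetherian ring. The assignments X ↦ Ass X := ⋃_{M∈X} Ass M and Φ ↦ {M finitely generated : Ass M ⊆ Φ} give mutually inverse bijections between torsionfree classes of finitely generated R-modules and subsets of Spec R. -/
/-- The set of associated primes of the objects of a subcategory `X` of the category of
`R`-modules. -/
def assOfSubcat (R : Type) [CommRing R]
    (X : ∀ (M : Type) [AddCommGroup M] [Module R M], Prop) : Set (Ideal R) :=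
  {q | ∃ (M : Type) (i : AddCommGroup M) (i2 : @Module R M _ i.toAddCommMonoid),
    @X M i i2 ∧ q ∈ @associatedPrimes R _ M i.toAddCommMonoid i2}

section Takahashi

open Submodule

variable {R : Type} [CommRing R]

private lemma ass_old [IsNoetherianRing R] {q : Ideal R} {M : Type} [AddCommGroup M]
    [Module R M] :
    q ∈ associatedPrimes R M ↔ q.IsPrime ∧ ∃ x : M, q = (R ∙ x).annihilator := by
  rw [AssociatedPrimes.mem_iff, _root_.isAssociatedPrime_iff]
  have e : ∀ x : M, (⊥ : Submodule R M).colon {x} = (R ∙ x).annihilator := fun x => by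
    ext r
    rw [Submodule.mem_colon_singleton, Submodule.mem_bot,
      Submodule.mem_annihilator_span_singleton]
  simp only [e]

private lemma ann_witness_ne_zero {q : Ideal R} {M : Type} [AddCommGroup M] [Module R M]
    (hq : q.IsPrime) {x : M} (hx : q = (R ∙ x).annihilator) : x ≠ 0 := by
  rintro rfl
  exact hq.ne_top (by rw [hx, Submodule.span_singleton_eq_bot.mpr rfl, Submodule.annihilator_bot])

private lemma assPrimes_quotient_prime [IsNoetherianRing R] {p : Ideal R} (hp : p.IsPrime) :
    associatedPrimes R (R ⧸ p) ⊆ {p} := by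
  intro q hq'
  obtain ⟨hq, x, hx⟩ := ass_old.mp hq'
  obtain ⟨s, rfl⟩ := Submodule.mkQ_surjective p x
  have key : ∀ r : R, r • p.mkQ s = p.mkQ (r * s) := fun r => by
    rw [← smul_eq_mul, map_smul]
  have hs : s ∉ p := fun h =>
    ann_witness_ne_zero hq hx (by rwa [Submodule.mkQ_apply, Submodule.Quotient.mk_eq_zero])
  have : q = p := by
    ext r
    rw [hx, Submodule.mem_annihilator_span_singleton, key, Submodule.mkQ_apply,
      Submodule.Quotient.mk_eq_zero]
    exact ⟨fun h => (hp.mem_or_mem h).resolve_right hs, fun h => p.mul_mem_right s h⟩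
  exact this

private lemma self_mem_assPrimes_quotient [IsNoetherianRing R] {p : Ideal R} (hp : p.IsPrime) :
    p ∈ associatedPrimes R (R ⧸ p) := by
  refine ass_old.mpr ⟨hp, p.mkQ 1, ?_⟩
  ext r
  rw [Submodule.mem_annihilator_span_singleton, ← map_smul, smul_eq_mul, mul_one,
    Submodule.mkQ_apply, Submodule.Quotient.mk_eq_zero]

private noncomputable def quotEquivSpanSingleton {M : Type} [AddCommGroup M] [Module R M]
    {x : M} {p : Ideal R} (hx : p = (R ∙ x).annihilator) : (R ⧸ p) ≃ₗ[R] ↥(R ∙ x) := by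
  have hker : LinearMap.ker (LinearMap.toSpanSingleton R M x) = p := by
    ext r
    rw [LinearMap.mem_ker, LinearMap.toSpanSingleton_apply, hx,
      Submodule.mem_annihilator_span_singleton]
  exact (Submodule.quotEquivOfEq _ _ hker.symm).trans
    ((LinearMap.quotKerEquivRange _).trans
      (LinearEquiv.ofEq _ _ (LinearMap.span_singleton_eq_range R M x).symm))

private lemma assPrimes_span_singleton_subset [IsNoetherianRing R] {M : Type} [AddCommGroup M] [Module R M]
    {x : M} {p : Ideal R} (hp : p.IsPrime) (hx : p = (R ∙ x).annihilator) :
    associatedPrimes R ↥(R ∙ x) ⊆ {p} := by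
  rw [← LinearEquiv.AssociatedPrimes.eq (quotEquivSpanSingleton hx)]
  exact assPrimes_quotient_prime hp

private lemma assPrimes_subset_union [IsNoetherianRing R] {M : Type} [AddCommGroup M] [Module R M]
    (N : Submodule R M) :
    associatedPrimes R M ⊆ associatedPrimes R ↥N ∪ associatedPrimes R (M ⧸ N) := by
  intro p hp'
  obtain ⟨hp, x, hx⟩ := ass_old.mp hp'
  have hxmem : ∀ r : R, r ∈ p ↔ r • x = 0 := fun r => by
    rw [hx, Submodule.mem_annihilator_span_singleton]
  by_cases h : ∃ r : R, r • x ∈ N ∧ r • x ≠ 0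
  · obtain ⟨r, hrN, hr0⟩ := h
    left
    refine ass_old.mpr ⟨hp, ⟨r • x, hrN⟩, ?_⟩
    ext s
    rw [Submodule.mem_annihilator_span_singleton]
    have hcoe : (s • (⟨r • x, hrN⟩ : N) = 0) ↔ s • (r • x) = 0 := by
      rw [Subtype.ext_iff]; rfl
    rw [hcoe]
    constructor
    · intro hs
      rw [smul_smul, mul_comm, ← smul_smul, (hxmem s).mp hs, smul_zero]
    · intro hs
      rw [smul_smul] at hs
      rcases hp.mem_or_mem ((hxmem _).mpr hs) with h' | h'
      · exact h'
      · exact absurd ((hxmem r).mp h') hr0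
  · right
    push_neg at h
    refine ass_old.mpr ⟨hp, N.mkQ x, ?_⟩
    ext s
    rw [Submodule.mem_annihilator_span_singleton, ← map_smul, Submodule.mkQ_apply,
      Submodule.Quotient.mk_eq_zero]
    constructor
    · intro hs
      rw [(hxmem s).mp hs]; exact N.zero_mem
    · intro hs
      exact (hxmem s).mpr (h s hs)

private lemma smul_eq_zero_of_ass [IsNoetherianRing R] {M : Type} [AddCommGroup M] [Module R M]
    {p : Ideal R} (hass : associatedPrimes R M ⊆ {p}) {r : R} (hr : r ∉ p) {x : M}
    (hx : r • x = 0) : x = 0 := by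
  by_contra h
  obtain ⟨q, hq, hle⟩ := exists_le_isAssociatedPrime_of_isNoetherianRing R x h
  have hqp : q = p := hass hq
  exact hr (hqp ▸ hle (by rw [Submodule.mem_colon_singleton, Submodule.mem_bot]; exact hx))

private lemma exists_pow_le_annihilator [IsNoetherianRing R] (M : Type) [AddCommGroup M]
    [Module R M] [Module.Finite R M] {p : Ideal R} (hass : associatedPrimes R M ⊆ {p}) :
    ∃ n : ℕ, p ^ n ≤ Module.annihilator R M := by
  have key : p ≤ (Module.annihilator R M).radical := by
    intro a ha
    have main : ∃ n : ℕ, ∀ x : M, a ^ n • x = 0 := by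
      set f : M →ₗ[R] M := LinearMap.lsmul R M a with hf
      have hfk : ∀ (k : ℕ) (x : M), (f ^ k) x = a ^ k • x := by
        intro k
        induction k with
        | zero => intro x; simp
        | succ k ih =>
          intro x
          rw [pow_succ, Module.End.mul_apply, ih, hf, LinearMap.lsmul_apply, pow_succ,
            mul_comm, mul_smul, smul_comm]
      let c : ℕ →o Submodule R M :=
        ⟨fun k => LinearMap.ker (f ^ k), by
          intro k l hkl
          intro x hxk
          rw [LinearMap.mem_ker] at hxk ⊢
          rw [hfk] at hxk ⊢
          obtain ⟨m, rfl⟩ := Nat.exists_eq_add_of_le hkl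
          rw [pow_add, mul_comm, mul_smul, hxk, smul_zero]⟩
      obtain ⟨n, hn⟩ := monotone_stabilizes_iff_noetherian.mpr inferInstance c
      refine ⟨n, fun x => ?_⟩
      by_contra hx
      haveI : Nontrivial ↥(LinearMap.range (f ^ n)) := by
        refine ⟨⟨⟨a ^ n • x, ⟨x, hfk n x⟩⟩, 0, ?_⟩⟩
        intro hcon
        exact hx (by simpa using congrArg Subtype.val hcon)
      obtain ⟨q, hq⟩ := associatedPrimes.nonempty R ↥(LinearMap.range (f ^ n))
      have hqM : q ∈ associatedPrimes R M :=
        associatedPrimes.subset_of_injective (Submodule.injective_subtype _) hq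
      have hqp : q = p := hass hqM
      obtain ⟨hqpr, z, hz⟩ := ass_old.mp hq
      have hz0 : z ≠ 0 := ann_witness_ne_zero hqpr hz
      obtain ⟨w, hw⟩ := z.2
      have haz : a • z = 0 := by
        have haq : a ∈ q := hqp ▸ ha
        rw [hz, Submodule.mem_annihilator_span_singleton] at haq
        exact haq
      have haz' : a • (z : M) = 0 := congrArg Subtype.val haz
      have hwk : w ∈ LinearMap.ker (f ^ (n + 1)) := by
        rw [LinearMap.mem_ker, hfk, pow_succ, mul_comm, mul_smul, ← hfk n w, hw, haz']
      have hwk' : w ∈ LinearMap.ker (f ^ n) := by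
        have hcn : c n = c (n + 1) := hn (n + 1) (Nat.le_succ n)
        exact (show LinearMap.ker (f ^ n) = LinearMap.ker (f ^ (n + 1)) from hcn) ▸ hwk
      apply hz0
      apply Subtype.ext
      rw [← hw]
      show (f ^ n) w = (0 : ↥(LinearMap.range (f ^ n)))
      rw [LinearMap.mem_ker.mp hwk']
      rfl
    obtain ⟨n, hn⟩ := main
    rw [Ideal.mem_radical_iff]
    exact ⟨n, Module.mem_annihilator.mpr hn⟩
  obtain ⟨n, hn⟩ := Ideal.exists_pow_le_of_le_radical_of_fg key (IsNoetherian.noetherian p)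
  exact ⟨n, hn⟩

private lemma ass_quotient_torsionBySet [IsNoetherianRing R] (M : Type) [AddCommGroup M]
    [Module R M] [Module.Finite R M] {p : Ideal R} (hass : associatedPrimes R M ⊆ {p}) :
    associatedPrimes R (M ⧸ Submodule.torsionBySet R M ↑p) ⊆ {p} := by
  classical
  set T := Submodule.torsionBySet R M ↑p with hT
  intro q hq'
  obtain ⟨hq, x, hx⟩ := ass_old.mp hq'
  obtain ⟨b, rfl⟩ := T.mkQ_surjective x
  have hxmem : ∀ r : R, r ∈ q ↔ r • T.mkQ b = 0 := fun r => by
    rw [hx, Submodule.mem_annihilator_span_singleton]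
  have hb : b ∉ T := by
    intro hbT
    exact ann_witness_ne_zero hq hx
      (by rw [Submodule.mkQ_apply, Submodule.Quotient.mk_eq_zero]; exact hbT)
  obtain ⟨n, hn⟩ := exists_pow_le_annihilator M hass
  have hpq : p ≤ q := by
    apply Ideal.IsPrime.le_of_pow_le (hP := hq) (n := n)
    intro c hc
    rw [hxmem, ← map_smul, Module.mem_annihilator.mp (hn hc) b, map_zero]
  have hqp : q ≤ p := by
    intro r hrq
    by_contra hrp
    have hrb : r • b ∈ T := by
      rw [← Submodule.Quotient.mk_eq_zero T, ← Submodule.mkQ_apply, map_smul]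
      exact (hxmem r).mp hrq
    -- minimal k with p^k annihilating b
    let Pk : ℕ → Prop := fun k => ∀ c ∈ (p ^ k : Ideal R), c • b = 0
    have hex : ∃ k, Pk k := ⟨n, fun c hc => Module.mem_annihilator.mp (hn hc) b⟩
    have hP1 : ¬ Pk 1 := by
      intro hcon
      apply hb
      rw [hT]
      rw [Submodule.mem_torsionBySet_iff]
      rintro ⟨a, ha⟩
      exact hcon a (by rwa [pow_one])
    set k := Nat.find hex with hkdef
    have hk : Pk k := Nat.find_spec hex
    have hkne1 : k ≠ 1 := fun h => hP1 (h ▸ hk)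
    have hkne0 : k ≠ 0 := by
      intro h
      have := hk 1 (by rw [h, pow_zero, Ideal.one_eq_top]; exact Submodule.mem_top)
      rw [one_smul] at this
      exact hb (this ▸ T.zero_mem)
    have hk1 : ¬ Pk (k - 1) := Nat.find_min hex (by omega)
    simp only [Pk, not_forall] at hk1
    obtain ⟨c, hc, hcb⟩ := hk1
    have hcp : c ∈ p := Ideal.pow_le_self (by omega : k - 1 ≠ 0) hc
    have hyT : c • b ∈ T := by
      rw [hT, Submodule.mem_torsionBySet_iff]
      rintro ⟨a, ha⟩
      show a • c • b = 0
      rw [smul_smul]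
      apply hk
      have : k = (k - 1) + 1 := by omega
      rw [this, pow_succ, mul_comm a c]
      exact Ideal.mul_mem_mul hc ha
    have hrcb : r • (c • b) = 0 := by
      rw [smul_comm]
      have := (Submodule.mem_torsionBySet_iff _ _).mp hrb ⟨c, hcp⟩
      exact (by rwa [smul_smul, ← smul_smul] at this : c • r • b = 0)
    exact hcb (smul_eq_zero_of_ass hass hrp hrcb)
  exact le_antisymm hqp hpq

private lemma exists_embedding_finite_free (D : Type) [CommRing D] [IsDomain D]
    (T : Type) [AddCommGroup T] [Module D T] [Module.Finite D T]
    (htf : ∀ (d : D) (t : T), d • t = 0 → d = 0 ∨ t = 0) :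
    ∃ (n : ℕ) (f : T →ₗ[D] (Fin n → D)), Function.Injective f := by
  classical
  set S := nonZeroDivisors D with hS
  let K := FractionRing D
  let L := LocalizedModule S T
  haveI : Module.Finite K L :=
    Module.Finite.of_isLocalizedModule S (LocalizedModule.mkLinearMap S T)
  set n := Module.finrank K L with hn
  let bb : Module.Basis (Fin n) K L := Module.finBasis K L
  let e : L ≃ₗ[K] (Fin n → K) := bb.equivFun
  let g : T →ₗ[D] (Fin n → K) :=
    (e.restrictScalars D).toLinearMap ∘ₗ LocalizedModule.mkLinearMap S T
  have hmkinj : Function.Injective (LocalizedModule.mkLinearMap S T) := by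
    intro u v huv
    have : u - v ∈ LinearMap.ker (LocalizedModule.mkLinearMap S T) := by
      rw [LinearMap.mem_ker, map_sub, huv, sub_self]
    rw [LocalizedModule.mem_ker_mkLinearMap_iff] at this
    obtain ⟨r, hrS, hr⟩ := this
    rcases htf r (u - v) hr with h | h
    · exact absurd h (nonZeroDivisors.ne_zero hrS)
    · exact sub_eq_zero.mp h
  have hginj : Function.Injective g := by
    intro u v huv
    exact hmkinj ((e.restrictScalars D).injective huv)
  -- clear denominators
  obtain ⟨s, hs⟩ := Module.Finite.fg_top (R := D) (M := T)
  obtain ⟨b, hb⟩ := IsLocalization.exist_integer_multiples (S := K) S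
    (s ×ˢ (Finset.univ : Finset (Fin n))) (fun q => g q.1 q.2)
  set h : T →ₗ[D] (Fin n → K) := (b : D) • g with hh
  have halg : Function.Injective (Algebra.linearMap D K) := IsFractionRing.injective D K
  have hrange : LinearMap.range h ≤
      Submodule.pi Set.univ (fun _ : Fin n => LinearMap.range (Algebra.linearMap D K)) := by
    rw [LinearMap.range_eq_map, ← hs, Submodule.map_span, Submodule.span_le]
    rintro _ ⟨t, ht, rfl⟩
    intro i _
    have := hb (t, i) (Finset.mem_product.mpr ⟨ht, Finset.mem_univ i⟩)
    obtain ⟨d, hd⟩ := this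
    exact ⟨d, hd⟩
  have hmem : ∀ (i : Fin n) (t : T), h t i ∈ LinearMap.range (Algebra.linearMap D K) := by
    intro i t
    exact hrange (LinearMap.mem_range_self h t) i (Set.mem_univ i)
  let F : T →ₗ[D] (Fin n → D) := LinearMap.pi fun i =>
    ((LinearEquiv.ofInjective (Algebra.linearMap D K) halg).symm.toLinearMap) ∘ₗ
      LinearMap.codRestrict (LinearMap.range (Algebra.linearMap D K))
        ((LinearMap.proj i) ∘ₗ h) (fun t => by simpa using hmem i t)
  refine ⟨n, F, ?_⟩
  have hF0 : ∀ t : T, F t = 0 → t = 0 := by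
    intro t hFt
    have hht : h t = 0 := by
      funext i
      have h1 := congrFun hFt i
      rw [LinearMap.pi_apply] at h1
      have h2 : LinearMap.codRestrict (LinearMap.range (Algebra.linearMap D K))
          ((LinearMap.proj i) ∘ₗ h) (fun t => by simpa using hmem i t) t = 0 := by
        have := congrArg (LinearEquiv.ofInjective (Algebra.linearMap D K) halg) h1
        simpa using this
      have h3 := congrArg Subtype.val h2
      simpa using h3
    have hgt : g t = 0 := by
      funext i
      have h4 : (b : D) • (g t i) = 0 := by
        have := congrFun hht i
        simpa [hh] using this
      rw [Algebra.smul_def] at h4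
      rcases mul_eq_zero.mp h4 with h5 | h5
      · exact absurd h5 (by
          intro hcon
          exact nonZeroDivisors.ne_zero b.2 (halg (by simp [hcon])))
      · exact h5
    exact hginj (by rw [hgt, map_zero])
  intro u v huv
  have : u - v = 0 := hF0 (u - v) (by rw [map_sub, huv, sub_self])
  exact sub_eq_zero.mp this

private def finSuccEquivProd (A : Type) [AddCommGroup A] [Module R A] (n : ℕ) :
    (Fin (n + 1) → A) ≃ₗ[R] A × (Fin n → A) where
  toFun w := (w 0, fun i => w i.succ)
  map_add' _ _ := rfl
  map_smul' _ _ := rfl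
  invFun p := Fin.cons p.1 p.2
  left_inv w := by
    funext i
    refine Fin.cases ?_ (fun j => ?_) i
    · simp
    · simp
  right_inv p := by
    refine Prod.ext ?_ ?_
    · simp
    · funext j; simp


section ClosureProps
variable [IsNoetherianRing R]

variable (X : ∀ (M : Type) [AddCommGroup M] [Module R M], Prop)
variable (hX2 : ∀ (M N : Type) [AddCommGroup M] [Module R M] [AddCommGroup N] [Module R N],
        (M ≃ₗ[R] N) → X M → X N)
variable (hX3 : ∀ (M : Type) [AddCommGroup M] [Module R M], Subsingleton M → X M)
variable (hX4 : ∀ (M : Type) [AddCommGroup M] [Module R M] (N : Submodule R M), X M → X ↥N)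
variable (hX5 : ∀ (A B C : Type) [AddCommGroup A] [Module R A] [AddCommGroup B] [Module R B]
          [AddCommGroup C] [Module R C] (f : A →ₗ[R] B) (g : B →ₗ[R] C),
        Function.Injective f → Function.Surjective g → Function.Exact f g →
        X A → X C → X B)

omit [IsNoetherianRing R] in
include hX2 hX3 hX5 in
private lemma X_pi (A : Type) [AddCommGroup A] [Module R A] (hA : X A) (n : ℕ) :
    X (Fin n → A) := by
  induction n with
  | zero => exact hX3 _ inferInstance
  | succ n ih =>
    have hprod : X (A × (Fin n → A)) :=
      hX5 A (A × (Fin n → A)) (Fin n → A) (LinearMap.inl R A (Fin n → A))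
        (LinearMap.snd R A (Fin n → A)) LinearMap.inl_injective
        (fun v => ⟨(0, v), rfl⟩) Function.Exact.inl_snd hA ih
    exact hX2 _ _ (finSuccEquivProd A n).symm hprod

include hX2 hX3 hX4 hX5 in
private lemma X_coprimary {p : Ideal R} (hp : p.IsPrime) (hXp : X (R ⧸ p)) :
    ∀ (n : ℕ) (M : Type) [AddCommGroup M] [Module R M] [Module.Finite R M],
      p ^ n ≤ Module.annihilator R M → associatedPrimes R M ⊆ {p} → X M := by
  intro n
  induction n with
  | zero =>
    intro M _ _ _ hann _
    refine hX3 M ?_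
    have h1 : (1 : R) ∈ Module.annihilator R M := by
      apply hann
      rw [pow_zero, Ideal.one_eq_top]
      exact Submodule.mem_top
    refine subsingleton_of_forall_eq 0 fun y => ?_
    have := Module.mem_annihilator.mp h1 y
    rwa [one_smul] at this
  | succ n ih =>
    intro M _ _ _ hann hass
    by_cases htriv : Subsingleton M
    · exact hX3 M htriv
    set T := Submodule.torsionBySet R M ↑p with hT
    -- T as an (R ⧸ p)-module
    set D := R ⧸ p with hD
    haveI : IsDomain D := Ideal.Quotient.isDomain p
    haveI : Module.Finite R ↥T := inferInstance
    haveI hTfin : Module.Finite D ↥T := by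
      obtain ⟨s, hs⟩ := Module.Finite.fg_top (R := R) (M := ↥T)
      refine ⟨⟨s, top_le_iff.mp fun x _ => ?_⟩⟩
      have hx : x ∈ Submodule.span R (s : Set ↥T) := by rw [hs]; exact Submodule.mem_top
      have hle : Submodule.span R (s : Set ↥T) ≤
          Submodule.restrictScalars R (Submodule.span D (s : Set ↥T)) :=
        Submodule.span_le_restrictScalars R D (s : Set ↥T)
      exact hle hx
    have htf : ∀ (d : D) (t : ↥T), d • t = 0 → d = 0 ∨ t = 0 := by
      intro d t hdt
      obtain ⟨r, rfl⟩ := Ideal.Quotient.mk_surjective d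
      by_cases hr : r ∈ p
      · left; exact Ideal.Quotient.eq_zero_iff_mem.mpr hr
      · right
        have hrt : r • t = 0 := by
          rw [← Submodule.torsionBySet.mk_smul]
          exact hdt
        have hrt' : r • (t : M) = 0 := congrArg Subtype.val hrt
        exact Subtype.ext (smul_eq_zero_of_ass hass hr hrt')
    obtain ⟨m, f, hfinj⟩ := exists_embedding_finite_free D ↥T htf
    -- transfer to R-linear
    let fR : ↥T →ₗ[R] (Fin m → D) := f.restrictScalars R
    have hfRinj : Function.Injective fR := hfinj
    have hXT : X ↥T := by
      have hpi : X (Fin m → D) := X_pi X hX2 hX3 hX5 (R ⧸ p) hXp m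
      have hXrange : X ↥(LinearMap.range fR) := hX4 _ _ hpi
      exact hX2 _ _ (LinearEquiv.ofInjective fR hfRinj).symm hXrange
    -- the quotient
    have hassQ : associatedPrimes R (M ⧸ T) ⊆ {p} := ass_quotient_torsionBySet M hass
    have hannQ : p ^ n ≤ Module.annihilator R (M ⧸ T) := by
      intro c hc
      rw [Module.mem_annihilator]
      intro y
      obtain ⟨x, rfl⟩ := T.mkQ_surjective y
      rw [← map_smul]
      have hcx : c • x ∈ T := by
        rw [hT, Submodule.mem_torsionBySet_iff]
        rintro ⟨a, ha⟩
        show a • c • x = 0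
        rw [smul_smul]
        have hac : a * c ∈ p ^ (n + 1) := by
          rw [pow_succ, mul_comm a c]
          exact Ideal.mul_mem_mul hc ha
        exact Module.mem_annihilator.mp (hann hac) x
      rw [Submodule.mkQ_apply, Submodule.Quotient.mk_eq_zero]
      exact hcx
    have hXQ : X (M ⧸ T) := ih (M ⧸ T) hannQ hassQ
    exact hX5 ↥T M (M ⧸ T) T.subtype T.mkQ (Submodule.injective_subtype T)
      (Submodule.mkQ_surjective T) (LinearMap.exact_subtype_mkQ T) hXT hXQ

include hX2 hX3 hX4 hX5 in
private lemma X_main (M : Type) [AddCommGroup M] [Module R M] [Module.Finite R M]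
    (hΦ : ∀ q ∈ associatedPrimes R M, X (R ⧸ q)) : X M := by
  have key : ∀ N : Submodule R M,
      (∀ q ∈ associatedPrimes R (M ⧸ N), X (R ⧸ q)) → X (M ⧸ N) := by
    intro N
    induction N using IsNoetherian.induction with
    | _ N IH =>
      intro h
      by_cases htriv : Subsingleton (M ⧸ N)
      · exact hX3 _ htriv
      haveI : Nontrivial (M ⧸ N) := not_subsingleton_iff_nontrivial.mp htriv
      -- a maximal associated prime p of M ⧸ N
      obtain ⟨p, hpB, hpmax⟩ := (set_has_maximal_iff_noetherian.mpr
        (inferInstance : IsNoetherianRing R)) (associatedPrimes R (M ⧸ N))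
        (associatedPrimes.nonempty R (M ⧸ N))
      obtain ⟨hpprime, x, hx⟩ := ass_old.mp hpB
      have hpB' : p ∈ associatedPrimes R (M ⧸ N) := ass_old.mpr ⟨hpprime, x, hx⟩
      have hx0 : x ≠ 0 := ann_witness_ne_zero hpprime hx
      -- a maximal submodule S₀ with Ass ⊆ {p}
      obtain ⟨S₀, hS₀mem, hS₀max⟩ := (set_has_maximal_iff_noetherian.mpr
        (inferInstance : IsNoetherian R (M ⧸ N)))
        {S : Submodule R (M ⧸ N) | associatedPrimes R ↥S ⊆ {p}}
        ⟨⊥, by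
          show associatedPrimes R ↥(⊥ : Submodule R (M ⧸ N)) ⊆ {p}
          rw [associatedPrimes.eq_empty_of_subsingleton]
          exact Set.empty_subset _⟩
      have hS₀ne : S₀ ≠ ⊥ := by
        intro hbot
        refine hS₀max (R ∙ x) (assPrimes_span_singleton_subset hpprime hx) ?_
        rw [hbot]
        exact bot_lt_iff_ne_bot.mpr (fun hc => hx0 (Submodule.span_singleton_eq_bot.mp hc))
      -- S₀ is in X by the coprimary lemma
      have hXS₀ : X ↥S₀ := by
        obtain ⟨n, hn⟩ := exists_pow_le_annihilator ↥S₀ hS₀mem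
        exact X_coprimary X hX2 hX3 hX4 hX5 hpprime (h p hpB') n ↥S₀ hn hS₀mem
      -- associated primes of the quotient stay inside those of M ⧸ N
      have hquot : associatedPrimes R ((M ⧸ N) ⧸ S₀) ⊆ associatedPrimes R (M ⧸ N) := by
        rintro q hq'
        by_contra hqB
        obtain ⟨hqpr, xb, hxb⟩ := ass_old.mp hq'
        obtain ⟨b, rfl⟩ := S₀.mkQ_surjective xb
        have hb : b ∉ S₀ := by
          intro hbS
          exact ann_witness_ne_zero hqpr hxb
            (by rw [Submodule.mkQ_apply, Submodule.Quotient.mk_eq_zero]; exact hbS)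
        set S' := S₀ ⊔ (R ∙ b) with hS'
        have hle : S₀ ≤ S' := le_sup_left
        refine hS₀max S' ?_ (lt_of_le_of_ne hle ?_)
        · -- Ass S' ⊆ {p}
          intro q' hq'
          have hq'B : q' ∈ associatedPrimes R (M ⧸ N) :=
            associatedPrimes.subset_of_injective (Submodule.injective_subtype _) hq'
          have hsplit := assPrimes_subset_union (Submodule.comap S'.subtype S₀) hq'
          rcases hsplit with hcase | hcase
          · -- comap S'.subtype S₀ ≃ S₀
            have e1 := Submodule.comapSubtypeEquivOfLe hle
            have : q' ∈ associatedPrimes R ↥S₀ := by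
              rwa [LinearEquiv.AssociatedPrimes.eq e1] at hcase
            exact hS₀mem this
          · -- quotient is R ∙ (mkQ b), with Ass ⊆ {q}: contradiction with q ∉ Ass
            exfalso
            set φ : ↥S' →ₗ[R] (M ⧸ N) ⧸ S₀ := S₀.mkQ ∘ₗ S'.subtype with hφ
            have hkerφ : LinearMap.ker φ = Submodule.comap S'.subtype S₀ := by
              rw [hφ, LinearMap.ker_comp, Submodule.ker_mkQ]
            have hrangeφ : LinearMap.range φ = (R ∙ S₀.mkQ b) := by
              rw [hφ, LinearMap.range_comp, Submodule.range_subtype, hS',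
                Submodule.map_sup, Submodule.map_span, Set.image_singleton]
              have hmapbot : Submodule.map S₀.mkQ S₀ = ⊥ := by
                ext y
                simp only [Submodule.mem_map, Submodule.mem_bot]
                constructor
                · rintro ⟨z, hz, rfl⟩
                  rw [Submodule.mkQ_apply, Submodule.Quotient.mk_eq_zero]
                  exact hz
                · rintro rfl
                  exact ⟨0, S₀.zero_mem, map_zero _⟩
              rw [hmapbot, bot_sup_eq]
            have e3 : (↥S' ⧸ Submodule.comap S'.subtype S₀) ≃ₗ[R] ↥(R ∙ S₀.mkQ b) :=
              (Submodule.quotEquivOfEq _ _ hkerφ.symm).trans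
                ((LinearMap.quotKerEquivRange φ).trans (LinearEquiv.ofEq _ _ hrangeφ))
            have hmem3 : q' ∈ associatedPrimes R ↥(R ∙ S₀.mkQ b) := by
              rwa [← LinearEquiv.AssociatedPrimes.eq e3]
            have hq'q : q' = q := assPrimes_span_singleton_subset hqpr hxb hmem3
            exact hqB (hq'q ▸ hq'B)
        · -- S₀ ≠ S'
          intro heq
          apply hb
          have : b ∈ S' := (le_sup_right : (R ∙ b) ≤ S') (Submodule.mem_span_singleton_self b)
          rwa [← heq] at this
      -- pass to M ⧸ N' and use the inductive hypothesis
      set N' := Submodule.comap N.mkQ S₀ with hN'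
      have hNle : N ≤ N' := by
        intro m hm
        show N.mkQ m ∈ S₀
        rw [Submodule.mkQ_apply, (Submodule.Quotient.mk_eq_zero N).mpr hm]
        exact S₀.zero_mem
      have hNlt : N < N' := by
        refine lt_of_le_of_ne hNle ?_
        intro heq
        obtain ⟨y, hyS, hy0⟩ := Submodule.exists_mem_ne_zero_of_ne_bot hS₀ne
        obtain ⟨m, rfl⟩ := N.mkQ_surjective y
        apply hy0
        have hmN' : m ∈ N' := hyS
        rw [← heq] at hmN'
        rw [Submodule.mkQ_apply, Submodule.Quotient.mk_eq_zero]
        exact hmN'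
      have emap : Submodule.map N.mkQ N' = S₀ :=
        Submodule.map_comap_eq_of_surjective (Submodule.mkQ_surjective N) S₀
      have e2 : (((M ⧸ N) ⧸ S₀) ≃ₗ[R] (M ⧸ N')) :=
        (Submodule.quotEquivOfEq S₀ (Submodule.map N.mkQ N') emap.symm).trans
          (Submodule.quotientQuotientEquivQuotient N N' hNle)
      have hXQ : X ((M ⧸ N) ⧸ S₀) := by
        refine hX2 _ _ e2.symm (IH N' hNlt ?_)
        intro q hq
        apply h q
        apply hquot
        rwa [LinearEquiv.AssociatedPrimes.eq e2]
      exact hX5 ↥S₀ (M ⧸ N) ((M ⧸ N) ⧸ S₀) S₀.subtype S₀.mkQ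
        (Submodule.injective_subtype S₀) (Submodule.mkQ_surjective S₀)
        (LinearMap.exact_subtype_mkQ S₀) hXS₀ hXQ
  have hbot := key ⊥ (by
    intro q hq
    apply hΦ q
    rwa [LinearEquiv.AssociatedPrimes.eq (Submodule.quotEquivOfEqBot (⊥ : Submodule R M) rfl)]
      at hq)
  exact hX2 _ _ (Submodule.quotEquivOfEqBot (⊥ : Submodule R M) rfl) hbot

end ClosureProps

end Takahashi

/-- Takahashi's theorem: over a commutative noetherian ring `R`, the assignments
`X ↦ Ass X` and `Φ ↦ {M fin. gen. | Ass M ⊆ Φ}` are mutually inverse bijections between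
torsionfree classes of finitely generated `R`-modules and subsets of `Spec R`.
This is expressed by the two round-trip identities: every torsionfree class `X` equals the
class of finitely generated modules with associated primes in `Ass X`, and for every subset
`Φ` of `Spec R` the associated primes of the class determined by `Φ` recover `Φ`. -/
theorem torsionfree_class_bijection (R : Type) [CommRing R] [IsNoetherianRing R] :
    (∀ X : ∀ (M : Type) [AddCommGroup M] [Module R M], Prop,
      (∀ (M : Type) [AddCommGroup M] [Module R M], X M → Module.Finite R M) →
      (∀ (M N : Type) [AddCommGroup M] [Module R M] [AddCommGroup N] [Module R N],
        (M ≃ₗ[R] N) → X M → X N) →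
      (∀ (M : Type) [AddCommGroup M] [Module R M], Subsingleton M → X M) →
      (∀ (M : Type) [AddCommGroup M] [Module R M] (N : Submodule R M), X M → X ↥N) →
      (∀ (A B C : Type) [AddCommGroup A] [Module R A] [AddCommGroup B] [Module R B]
          [AddCommGroup C] [Module R C] (f : A →ₗ[R] B) (g : B →ₗ[R] C),
        Function.Injective f → Function.Surjective g → Function.Exact f g →
        X A → X C → X B) →
      ∀ (M : Type) [AddCommGroup M] [Module R M],
        (X M ↔ (Module.Finite R M ∧ associatedPrimes R M ⊆ assOfSubcat R X))) ∧
    (∀ Φ : Set (Ideal R), (∀ p ∈ Φ, p.IsPrime) →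
      assOfSubcat R
        (fun (M : Type) [AddCommGroup M] [Module R M] =>
          Module.Finite R M ∧ associatedPrimes R M ⊆ Φ) = Φ) := by
  constructor
  · intro X h1 h2 h3 h4 h5 M iM iM2
    constructor
    · intro hXM
      refine ⟨h1 M hXM, fun q hq => ⟨M, inferInstance, inferInstance, hXM, hq⟩⟩
    · rintro ⟨hfin, hsub⟩
      haveI := hfin
      apply X_main X h2 h3 h4 h5 M
      intro q hq
      obtain ⟨N, iN, iN2, hXN, hqN⟩ := hsub hq
      obtain ⟨hqpr, y, hy⟩ := ass_old.mp hqN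
      have hXspan : X ↥(Submodule.span R {y} : Submodule R N) := h4 N _ hXN
      exact h2 _ _ (quotEquivSpanSingleton hy).symm hXspan
  · intro Φ hΦ
    ext p
    constructor
    · rintro ⟨M, i, i2, ⟨hfin, hsub⟩, hp⟩
      exact hsub hp
    · intro hp
      have hpp := hΦ p hp
      refine ⟨R ⧸ p, inferInstance, inferInstance, ⟨inferInstance, fun q hq => ?_⟩,
        self_mem_assPrimes_quotient hpp⟩
      have : q = p := assPrimes_quotient_prime hpp hq
      rwa [this]
end

section
/- Let R be a commutative noetherian ring and X a full subcategory of finitely generated R-modules closed under quotients and extensions (a torsion class). Then X is a Serre subcategory, i.e., it is also closed under submodules. -/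
section Aux

variable {R : Type} [CommRing R] [IsNoetherianRing R]
variable {X : ∀ (M : Type) [AddCommGroup M] [Module R M], Prop}

/-- A linear equivalence between two subsingleton modules. -/
def subsingletonLEquiv (A B : Type) [AddCommGroup A] [Module R A] [AddCommGroup B] [Module R B]
    [Subsingleton A] [Subsingleton B] : A ≃ₗ[R] B where
  toFun := fun _ => 0
  invFun := fun _ => 0
  map_add' := by intros; simp
  map_smul' := by intros; simp
  left_inv := fun x => Subsingleton.elim _ _
  right_inv := fun x => Subsingleton.elim _ _

section withHyps

variable (hiso : ∀ (M N : Type) [AddCommGroup M] [Module R M] [AddCommGroup N] [Module R N],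
      (M ≃ₗ[R] N) → X M → X N)
variable (hquot : ∀ (M : Type) [AddCommGroup M] [Module R M] (N : Submodule R M),
      X M → X (M ⧸ N))
variable (hext : ∀ (A B C : Type) [AddCommGroup A] [Module R A] [AddCommGroup B] [Module R B]
        [AddCommGroup C] [Module R C] (f : A →ₗ[R] B) (g : B →ₗ[R] C),
      Function.Injective f → Function.Surjective g → Function.Exact f g → X A → X C → X B)

include hiso hquot in
/-- Closure under surjective images. -/
theorem Xsurj (M M' : Type) [AddCommGroup M] [Module R M] [AddCommGroup M'] [Module R M']
    (f : M →ₗ[R] M') (hf : Function.Surjective f) (hM : X M) : X M' :=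
  hiso _ _ (f.quotKerEquivOfSurjective hf) (hquot M (LinearMap.ker f) hM)

include hext in
/-- Closure under extensions, submodule form. -/
theorem Xext (P : Type) [AddCommGroup P] [Module R P] (S : Submodule R P)
    (h1 : X ↥S) (h2 : X (P ⧸ S)) : X P :=
  hext _ _ _ S.subtype S.mkQ (Submodule.injective_subtype S) (Submodule.mkQ_surjective S)
    (LinearMap.exact_subtype_mkQ S) h1 h2

include hiso hquot hext in
/-- The filtration lemma: a finitely generated module all of whose
"big" primes give `R⧸q ∈ X` is itself in `X`. -/
theorem Xfilt (h0 : X (R ⧸ (⊤ : Ideal R)))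
    (W : Type) [AddCommGroup W] [Module R W] [Module.Finite R W]
    (hq : ∀ q : Ideal R, q.IsPrime → Module.annihilator R W ≤ q → X (R ⧸ q)) : X W := by
  haveI : IsNoetherian R W := isNoetherian_of_isNoetherianRing_of_finite R W
  have main : ∀ S : Submodule R W, X (W ⧸ S) := by
    intro S
    refine (wellFounded_gt (α := Submodule R W)).induction (C := fun S => X (W ⧸ S)) S ?_
    intro S IH
    by_cases htop : S = ⊤
    · subst htop
      haveI : Subsingleton (W ⧸ (⊤ : Submodule R W)) :=
        Submodule.Quotient.subsingleton_iff.mpr rfl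
      haveI : Subsingleton (R ⧸ (⊤ : Ideal R)) :=
        Submodule.Quotient.subsingleton_iff.mpr rfl
      exact hiso _ _ (subsingletonLEquiv _ _) h0
    · -- find an associated prime of W ⧸ S
      obtain ⟨w, hw⟩ := SetLike.exists_of_lt (lt_top_iff_ne_top.mpr htop : S < ⊤)
      have hy : S.mkQ w ≠ 0 := by
        simpa [Submodule.mkQ_apply, Submodule.Quotient.mk_eq_zero] using hw.2
      obtain ⟨P, hP, -⟩ := exists_le_isAssociatedPrime_of_isNoetherianRing R (S.mkQ w) hy
      obtain ⟨hPprime, z, hz⟩ := isAssociatedPrime_iff.mp hP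
      -- z : W ⧸ S with P = annihilator of span z
      have hPz : P = Ideal.torsionOf R (W ⧸ S) z := by
        rw [hz]; ext r
        rw [Submodule.mem_colon_singleton, Submodule.mem_bot, Ideal.mem_torsionOf_iff]
      have hzne : z ≠ 0 := by
        intro h
        apply hPprime.ne_top
        rw [hPz, h, Ideal.torsionOf_zero]
      -- Ann W ≤ P
      have hannP : Module.annihilator R W ≤ P := by
        intro r hr
        rw [hPz, Ideal.mem_torsionOf_iff]
        obtain ⟨z', rfl⟩ := Submodule.mkQ_surjective S z
        rw [← map_smul]
        rw [Module.mem_annihilator] at hr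
        rw [hr z', map_zero]
      have hXRP : X (R ⧸ P) := hq P hPprime hannP
      -- the span of z is in X
      have hXK : X ↥(Submodule.span R {z}) := by
        refine hiso _ _ (?_ : (R ⧸ P) ≃ₗ[R] _) hXRP
        exact (Submodule.quotEquivOfEq _ _ hPz).trans
          (Ideal.quotTorsionOfEquivSpanSingleton R _ z)
      set K : Submodule R (W ⧸ S) := Submodule.span R {z} with hK
      set S' : Submodule R W := K.comap S.mkQ with hS'
      have hSS' : S < S' := by
        constructor
        · intro a ha
          show a ∈ K.comap S.mkQ
          rw [Submodule.mem_comap, Submodule.mkQ_apply, (Submodule.Quotient.mk_eq_zero S).mpr ha]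
          exact K.zero_mem
        · intro hle
          obtain ⟨z', rfl⟩ := Submodule.mkQ_surjective S z
          have : z' ∈ S' := by
            show z' ∈ K.comap S.mkQ
            rw [Submodule.mem_comap]
            exact Submodule.mem_span_singleton_self _
          have : z' ∈ S := hle this
          exact hzne ((Submodule.Quotient.mk_eq_zero S).mpr this)
      have hXq : X (W ⧸ S') := IH S' hSS'
      -- K = S'.map S.mkQ
      have hKmap : S'.map S.mkQ = K := by
        rw [hS', Submodule.map_comap_eq, Submodule.range_mkQ, top_inf_eq]
      have e : ((W ⧸ S) ⧸ K) ≃ₗ[R] (W ⧸ S') :=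
        (Submodule.quotEquivOfEq (S'.map S.mkQ) K hKmap).symm.trans
          (Submodule.quotientQuotientEquivQuotient S S' hSS'.le)
      have hXquot : X ((W ⧸ S) ⧸ K) := hiso _ _ e.symm hXq
      exact Xext hext (W ⧸ S) K hXK hXquot
  exact hiso _ _ (Submodule.quotEquivOfEqBot ⊥ rfl) (main ⊥)

include hiso hquot hext in
/-- Inner induction: if `M ∈ X` is `p`-torsion with annihilator exactly `p`,
generated by at most `n` elements, then `R ⧸ p ∈ X`. -/
theorem Xinner (h0 : X (R ⧸ (⊤ : Ideal R))) (p : Ideal R) (hp : p.IsPrime)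
    (IH : ∀ q : Ideal R, p < q → q.IsPrime → X (R ⧸ q)) :
    ∀ n : ℕ, ∀ (M : Type) [AddCommGroup M] [Module R M], X M →
      ∀ s : Finset M, Submodule.span R (s : Set M) = ⊤ → s.card ≤ n →
      p ≤ Module.annihilator R M → Module.annihilator R M ≤ p → X (R ⧸ p) := by
  intro n
  induction n with
  | zero =>
    intro M _ _ _ s hspan hcard hple hpge
    exfalso
    apply hp.ne_top
    rw [Ideal.eq_top_iff_one]
    apply hpge
    rw [Module.mem_annihilator]
    intro m
    have hm : m ∈ (⊤ : Submodule R M) := trivial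
    rw [← hspan, Finset.card_eq_zero.mp (Nat.le_zero.mp hcard)] at hm
    simp only [Finset.coe_empty, Submodule.span_empty, Submodule.mem_bot] at hm
    rw [hm, smul_zero]
  | succ n IHn =>
    intro M _ _ hXM s hspan hcard hple hpge
    classical
    -- find a generator with torsion ideal contained in (hence equal to) p
    have hex : ∃ x ∈ s, Ideal.torsionOf R M x ≤ p := by
      by_contra hno
      push_neg at hno
      have hch : ∀ x ∈ s, ∃ a, a ∈ Ideal.torsionOf R M x ∧ a ∉ p := by
        intro x hx
        obtain ⟨a, ha, hap⟩ := SetLike.not_le_iff_exists.mp (hno x hx)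
        exact ⟨a, ha, hap⟩
      choose a hator hap using hch
      set g : R := ∏ y ∈ s.attach, a y.1 y.2 with hg
      have hgp : g ∉ p := by
        intro hgmem
        obtain ⟨y, -, hy⟩ := (Ideal.IsPrime.prod_mem_iff).mp hgmem
        exact hap y.1 y.2 hy
      apply hgp
      apply hpge
      rw [← Submodule.annihilator_top, ← hspan]
      rw [Submodule.mem_annihilator_span]
      rintro ⟨x, hx⟩
      show g • x = 0
      have hmem : (⟨x, hx⟩ : {y // y ∈ s}) ∈ s.attach := Finset.mem_attach _ _
      rw [hg, ← Finset.mul_prod_erase _ _ hmem, mul_comm, mul_smul,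
        (Ideal.mem_torsionOf_iff x (a x hx)).mp (hator x hx), smul_zero]
    obtain ⟨x, hxs, hxp⟩ := hex
    have htx : Ideal.torsionOf R M x = p := by
      refine le_antisymm hxp (fun r hr => ?_)
      rw [Ideal.mem_torsionOf_iff]
      exact Module.mem_annihilator.mp (hple hr) x
    set K : Submodule R M := Submodule.span R {x} with hK
    by_cases hKtop : K = ⊤
    · have e : (R ⧸ p) ≃ₗ[R] M :=
        ((Submodule.quotEquivOfEq p _ htx.symm).trans
          (Ideal.quotTorsionOfEquivSpanSingleton R M x)).trans (LinearEquiv.ofTop K hKtop)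
      exact hiso M _ e.symm hXM
    · have hXC : X (M ⧸ K) := hquot M K hXM
      have hannMC : Module.annihilator R M ≤ Module.annihilator R (M ⧸ K) :=
        LinearMap.annihilator_le_of_surjective K.mkQ (Submodule.mkQ_surjective K)
      by_cases hC : Module.annihilator R (M ⧸ K) ≤ p
      · -- recurse with one fewer generator
        set s' : Finset (M ⧸ K) := (s.erase x).image K.mkQ with hs'
        have hspan' : Submodule.span R (s' : Set (M ⧸ K)) = ⊤ := by
          rw [hs', Finset.coe_image, Submodule.span_image]
          have h1 : Submodule.span R ((s.erase x : Finset M) : Set M) ⊔ K = ⊤ := by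
            rw [eq_top_iff, ← hspan, Submodule.span_le]
            intro y hy
            rcases eq_or_ne y x with h | h
            · subst h
              exact Submodule.mem_sup_right (Submodule.mem_span_singleton_self y)
            · exact Submodule.mem_sup_left (Submodule.subset_span
                (by simpa [Finset.mem_erase, h] using hy))
          have h2 : Submodule.map K.mkQ K = ⊥ := by
            rw [eq_bot_iff]
            rintro _ ⟨m, hm, rfl⟩
            rw [Submodule.mem_bot, Submodule.mkQ_apply, Submodule.Quotient.mk_eq_zero]
            exact hm
          have h3 := congrArg (Submodule.map K.mkQ) h1
          rw [Submodule.map_sup, h2, sup_bot_eq, Submodule.map_top,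
            Submodule.range_mkQ] at h3
          exact h3
        have hcard' : s'.card ≤ n := by
          calc s'.card ≤ (s.erase x).card := Finset.card_image_le
          _ = s.card - 1 := Finset.card_erase_of_mem hxs
          _ ≤ n := by omega
        exact IHn (M ⧸ K) hXC s' hspan' hcard' (le_trans hple hannMC) hC
      · obtain ⟨t, htC, htp⟩ := SetLike.not_le_iff_exists.mp hC
        set φ : M →ₗ[R] M := t • LinearMap.id with hφ
        have hGK : LinearMap.range φ ≤ K := by
          rintro _ ⟨m, rfl⟩
          have h1 : K.mkQ (t • m) = 0 := by
            rw [map_smul]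
            exact Module.mem_annihilator.mp htC _
          rw [Submodule.mkQ_apply, Submodule.Quotient.mk_eq_zero] at h1
          simpa [hφ] using h1
        have hXG : X ↥(LinearMap.range φ) :=
          Xsurj hiso hquot M _ φ.rangeRestrict φ.surjective_rangeRestrict hXM
        have hker : LinearMap.ker (LinearMap.toSpanSingleton R M x) = p := htx
        set ψ : (R ⧸ p) →ₗ[R] M :=
          Submodule.liftQ p (LinearMap.toSpanSingleton R M x) (le_of_eq hker.symm) with hψ
        have hψinj : Function.Injective ψ := by
          rw [← LinearMap.ker_eq_bot]
          exact Submodule.ker_liftQ_eq_bot' p _ hker.symm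
        have hψrange : LinearMap.range ψ = K := by
          rw [hψ, Submodule.range_liftQ]
          exact (LinearMap.span_singleton_eq_range R M x).symm
        set I' : Submodule R (R ⧸ p) := (LinearMap.range φ).comap ψ with hI'
        have hmapI' : I'.map ψ = LinearMap.range φ := by
          rw [hI', Submodule.map_comap_eq, hψrange, inf_eq_right.mpr hGK]
        have hXI' : X ↥I' := by
          have e : ↥I' ≃ₗ[R] ↥(LinearMap.range φ) :=
            (Submodule.equivMapOfInjective ψ hψinj I').trans (LinearEquiv.ofEq _ _ hmapI')
          exact hiso _ _ e.symm hXG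
        set J : Ideal R := I'.comap p.mkQ with hJ
        have hpJ : p ≤ J := by
          intro r hr
          show p.mkQ r ∈ I'
          rw [Submodule.mkQ_apply, (Submodule.Quotient.mk_eq_zero p).mpr hr]
          exact I'.zero_mem
        have hJmap : Submodule.map p.mkQ J = I' := by
          rw [hJ, Submodule.map_comap_eq, Submodule.range_mkQ, top_inf_eq]
        have hpltJ : p < J := by
          have hGne : LinearMap.range φ ≠ ⊥ := by
            intro hbot
            apply htp
            apply hpge
            rw [Module.mem_annihilator]
            intro m
            have h1 : φ m ∈ LinearMap.range φ := ⟨m, rfl⟩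
            rw [hbot, Submodule.mem_bot] at h1
            simpa [hφ] using h1
          obtain ⟨g, hgG, hgne⟩ := Submodule.exists_mem_ne_zero_of_ne_bot hGne
          have hgK : g ∈ LinearMap.range ψ := hψrange ▸ hGK hgG
          obtain ⟨u, rfl⟩ := hgK
          obtain ⟨r, rfl⟩ := Submodule.mkQ_surjective p u
          refine lt_of_le_of_ne hpJ (fun he => ?_)
          have hrJ : r ∈ J := by
            show p.mkQ r ∈ I'
            exact Submodule.mem_comap.mpr hgG
          rw [← he] at hrJ
          apply hgne
          rw [Submodule.mkQ_apply, (Submodule.Quotient.mk_eq_zero p).mpr hrJ, map_zero]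
        have hXRJ : X (R ⧸ J) := by
          apply Xfilt hiso hquot hext h0 (R ⧸ J)
          intro q hq hannq
          apply IH q ?_ hq
          have hJann : J ≤ Module.annihilator R (R ⧸ J) := by
            intro r hr
            rw [Module.mem_annihilator]
            intro y
            obtain ⟨y, rfl⟩ := Submodule.mkQ_surjective J y
            rw [← map_smul, Submodule.mkQ_apply, Submodule.Quotient.mk_eq_zero]
            rw [smul_eq_mul]
            exact Ideal.mul_mem_right _ _ hr
          exact lt_of_lt_of_le hpltJ (le_trans hJann hannq)
        have hXquot : X ((R ⧸ p) ⧸ I') := by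
          have e : ((R ⧸ p) ⧸ I') ≃ₗ[R] (R ⧸ J) :=
            (Submodule.quotEquivOfEq I' (Submodule.map p.mkQ J) hJmap.symm).trans
              (Submodule.quotientQuotientEquivQuotient p J hpJ)
          exact hiso _ _ e.symm hXRJ
        exact Xext hext (R ⧸ p) I' hXI' hXquot

include hiso hquot hext in
/-- Key lemma: if `M ∈ X` and `p` is a prime containing the annihilator of `M`,
then `R ⧸ p ∈ X`. -/
theorem Xkeyprime
    (hfg : ∀ (M : Type) [AddCommGroup M] [Module R M], X M → Module.Finite R M) :
    ∀ p : Ideal R, p.IsPrime →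
      ∀ (M : Type) [AddCommGroup M] [Module R M], X M →
        Module.annihilator R M ≤ p → X (R ⧸ p) := by
  intro p
  refine (wellFounded_gt (α := Ideal R)).induction
    (C := fun p => p.IsPrime → ∀ (M : Type) [AddCommGroup M] [Module R M], X M →
      Module.annihilator R M ≤ p → X (R ⧸ p)) p ?_
  intro p IH hp M _ _ hXM hann
  haveI : Module.Finite R M := hfg M hXM
  have h0 : X (R ⧸ (⊤ : Ideal R)) := by
    have h1 := hquot M ⊤ hXM
    haveI : Subsingleton (M ⧸ (⊤ : Submodule R M)) :=
      Submodule.Quotient.subsingleton_iff.mpr rfl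
    haveI : Subsingleton (R ⧸ (⊤ : Ideal R)) :=
      Submodule.Quotient.subsingleton_iff.mpr rfl
    exact hiso _ _ (subsingletonLEquiv _ _) h1
  have IH' : ∀ q : Ideal R, p < q → q.IsPrime → X (R ⧸ q) := fun q hq hqp =>
    IH q hq hqp M hXM (hann.trans hq.le)
  -- pass to M ⧸ pM
  set M1 : Type := M ⧸ (p • ⊤ : Submodule R M) with hM1
  have hXM1 : X M1 := hquot M _ hXM
  haveI : Module.Finite R M1 := Module.Finite.quotient R _
  have hple : p ≤ Module.annihilator R M1 := by
    intro r hr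
    rw [Module.mem_annihilator]
    intro m1
    obtain ⟨m, rfl⟩ := Submodule.mkQ_surjective _ m1
    rw [← map_smul, Submodule.mkQ_apply, Submodule.Quotient.mk_eq_zero]
    exact Submodule.smul_mem_smul hr trivial
  have hpge : Module.annihilator R M1 ≤ p := by
    intro t ht
    by_contra htp
    have hrange : LinearMap.range (t • (LinearMap.id : M →ₗ[R] M)) ≤
        p • (⊤ : Submodule R M) := by
      rintro _ ⟨m, rfl⟩
      have h1 : (Submodule.mkQ (p • ⊤ : Submodule R M)) (t • m) = 0 := by
        rw [map_smul]
        exact Module.mem_annihilator.mp ht _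
      rw [Submodule.mkQ_apply, Submodule.Quotient.mk_eq_zero] at h1
      simpa using h1
    obtain ⟨f, hmonic, -, hcoeff, heval⟩ :=
      LinearMap.exists_monic_and_coeff_mem_pow_and_aeval_eq_zero_of_range_le_smul R
        (t • LinearMap.id) p hrange
    have hevalann : Polynomial.eval t f ∈ Module.annihilator R M := by
      rw [Module.mem_annihilator]
      intro m
      have h1 : (t • (LinearMap.id : M →ₗ[R] M)) = algebraMap R (Module.End R M) t := rfl
      rw [h1, Polynomial.aeval_algebraMap_apply_eq_algebraMap_eval] at heval
      have h2 : algebraMap R (Module.End R M) (Polynomial.eval t f) m = 0 := by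
        rw [heval]; rfl
      exact h2
    have hevalp : Polynomial.eval t f ∈ p := hann hevalann
    have h4 : Polynomial.eval t f =
        (∑ k ∈ Finset.range f.natDegree, f.coeff k * t ^ k) + t ^ f.natDegree := by
      rw [Polynomial.eval_eq_sum_range, Finset.sum_range_succ, hmonic.coeff_natDegree, one_mul]
    have h5 : (∑ k ∈ Finset.range f.natDegree, f.coeff k * t ^ k) ∈ p := by
      apply Ideal.sum_mem
      intro k hk
      refine Ideal.mul_mem_right _ _ ?_
      exact Ideal.pow_le_self (Nat.sub_ne_zero_of_lt (Finset.mem_range.mp hk)) (hcoeff k)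
    have h6 : t ^ f.natDegree ∈ p := by
      have := p.sub_mem hevalp h5
      rwa [h4, add_sub_cancel_left] at this
    exact htp (hp.mem_of_pow_mem _ h6)
  obtain ⟨sf, hsf⟩ := Module.Finite.fg_top (R := R) (M := M1)
  exact Xinner hiso hquot hext h0 p hp IH' sf.card M1 hXM1 sf hsf le_rfl hple hpge

end withHyps

end Aux

/-- Over a commutative noetherian ring, a torsion class of finitely generated modules
(an isomorphism-closed full subcategory closed under quotients and extensions) is a Serre
subcategory, i.e. it is also closed under submodules. -/
theorem torsion_class_is_serre (R : Type) [CommRing R] [IsNoetherianRing R]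
    (X : ∀ (M : Type) [AddCommGroup M] [Module R M], Prop)
    (hfg : ∀ (M : Type) [AddCommGroup M] [Module R M], X M → Module.Finite R M)
    (hiso : ∀ (M N : Type) [AddCommGroup M] [Module R M] [AddCommGroup N] [Module R N],
      (M ≃ₗ[R] N) → X M → X N)
    (hquot : ∀ (M : Type) [AddCommGroup M] [Module R M] (N : Submodule R M),
      X M → X (M ⧸ N))
    (hext : ∀ (A B C : Type) [AddCommGroup A] [Module R A] [AddCommGroup B] [Module R B]
        [AddCommGroup C] [Module R C] (f : A →ₗ[R] B) (g : B →ₗ[R] C),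
      Function.Injective f → Function.Surjective g → Function.Exact f g → X A → X C → X B) :
    ∀ (M : Type) [AddCommGroup M] [Module R M] (N : Submodule R M), X M → X ↥N := by
  intro M _ _ N hXM
  haveI : Module.Finite R M := hfg M hXM
  haveI : IsNoetherian R M := isNoetherian_of_isNoetherianRing_of_finite R M
  have h0 : X (R ⧸ (⊤ : Ideal R)) := by
    have h1 := hquot M ⊤ hXM
    haveI : Subsingleton (M ⧸ (⊤ : Submodule R M)) :=
      Submodule.Quotient.subsingleton_iff.mpr rfl
    haveI : Subsingleton (R ⧸ (⊤ : Ideal R)) :=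
      Submodule.Quotient.subsingleton_iff.mpr rfl
    exact hiso _ _ (subsingletonLEquiv _ _) h1
  apply Xfilt hiso hquot hext h0 ↥N
  intro q hq hannq
  apply Xkeyprime hiso hquot hext hfg q hq M hXM
  refine le_trans ?_ hannq
  intro r hr
  rw [Module.mem_annihilator] at hr ⊢
  rintro ⟨n, hn⟩
  exact Subtype.ext (by simpa using hr n)
end

section
/- Let R be a commutative noetherian ring, X a torsionfree class of finitely generated R-modules, and S a Serre subcategory of X (with respect to conflations, i.e., short exact sequences of R-modules with all three terms in X). Then S is itself closed under submodules and extensions in the category of finitely generated R-modules; in particular S is a torsionfree class. -/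
open Submodule LinearMap

set_option linter.unusedSectionVars false

section Aux

variable (R : Type) [CommRing R] [IsNoetherianRing R]

/-- Bundle of the hypotheses of the main theorem. -/
structure TFHyp (X S : ∀ (M : Type) [AddCommGroup M] [Module R M], Prop) : Prop where
  hfg : ∀ (M : Type) [AddCommGroup M] [Module R M], X M → Module.Finite R M
  hsub : ∀ (M : Type) [AddCommGroup M] [Module R M] (N : Submodule R M), X M → X ↥N
  hext : ∀ (A B C : Type) [AddCommGroup A] [Module R A] [AddCommGroup B] [Module R B]
      [AddCommGroup C] [Module R C] (f : A →ₗ[R] B) (g : B →ₗ[R] C),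
    Function.Injective f → Function.Surjective g → Function.Exact f g → X A → X C → X B
  hSX : ∀ (M : Type) [AddCommGroup M] [Module R M], S M → X M
  hSiso : ∀ (M N : Type) [AddCommGroup M] [Module R M] [AddCommGroup N] [Module R N],
    (M ≃ₗ[R] N) → S M → S N
  hSzero : ∀ (M : Type) [AddCommGroup M] [Module R M], Subsingleton M → S M
  hSerre : ∀ (A B C : Type) [AddCommGroup A] [Module R A] [AddCommGroup B] [Module R B]
      [AddCommGroup C] [Module R C] (f : A →ₗ[R] B) (g : B →ₗ[R] C),
    Function.Injective f → Function.Surjective g → Function.Exact f g →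
    X A → X B → X C → (S B ↔ (S A ∧ S C))

variable {R}
variable {X S : ∀ (M : Type) [AddCommGroup M] [Module R M], Prop}

namespace TFHyp

/-- S is closed under extensions. -/
theorem sExt (h : TFHyp R X S) (A B C : Type) [AddCommGroup A] [Module R A] [AddCommGroup B]
    [Module R B] [AddCommGroup C] [Module R C] (f : A →ₗ[R] B) (g : B →ₗ[R] C)
    (hf : Function.Injective f) (hg : Function.Surjective g) (he : Function.Exact f g)
    (sa : S A) (sc : S C) : S B := by
  have XA := h.hSX A sa
  have XC := h.hSX C sc
  have XB := h.hext A B C f g hf hg he XA XC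
  exact (h.hSerre A B C f g hf hg he XA XB XC).mpr ⟨sa, sc⟩

/-- From `S B` and a surjection `B → V` with `V ∈ X`, both the kernel and `V` are in `S`. -/
theorem sKerQuot (h : TFHyp R X S) (B V : Type) [AddCommGroup B] [Module R B] [AddCommGroup V]
    [Module R V] (XB : X B) (SB : S B) (φ : B →ₗ[R] V) (hφ : Function.Surjective φ)
    (XV : X V) : S ↥(LinearMap.ker φ) ∧ S V := by
  have hexact : Function.Exact (LinearMap.ker φ).subtype φ := by
    intro y
    constructor
    · intro hy
      exact ⟨⟨y, hy⟩, rfl⟩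
    · rintro ⟨⟨x, hx⟩, rfl⟩
      exact hx
  exact (h.hSerre ↥(LinearMap.ker φ) B V (LinearMap.ker φ).subtype φ
    (Submodule.injective_subtype _) hφ hexact
    (h.hsub B (LinearMap.ker φ) XB) XB XV).mp SB

/-- S is closed under binary products. -/
theorem sProd (h : TFHyp R X S) (M M' : Type) [AddCommGroup M] [Module R M] [AddCommGroup M']
    [Module R M'] (sm : S M) (sm' : S M') : S (M × M') :=
  h.sExt M (M × M') M' (LinearMap.inl R M M') (LinearMap.snd R M M')
    LinearMap.inl_injective Prod.snd_surjective Function.Exact.inl_snd sm sm'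

theorem xProd (h : TFHyp R X S) (M M' : Type) [AddCommGroup M] [Module R M] [AddCommGroup M']
    [Module R M'] (xm : X M) (xm' : X M') : X (M × M') :=
  h.hext M (M × M') M' (LinearMap.inl R M M') (LinearMap.snd R M M')
    LinearMap.inl_injective Prod.snd_surjective Function.Exact.inl_snd xm xm'

theorem sEq (h : TFHyp R X S) {M : Type} [AddCommGroup M] [Module R M]
    {W₁ W₂ : Submodule R M} (e : W₁ = W₂) (s : S ↥W₁) : S ↥W₂ :=
  h.hSiso ↥W₁ ↥W₂ (LinearEquiv.ofEq W₁ W₂ e) s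

/-- S is closed under sums of two S-submodules of an X-module. -/
theorem sSup (h : TFHyp R X S) {M : Type} [AddCommGroup M] [Module R M] (XM : X M)
    (W₁ W₂ : Submodule R M) (s₁ : S ↥W₁) (s₂ : S ↥W₂) : S ↥(W₁ ⊔ W₂) := by
  set φ : (↥W₁ × ↥W₂) →ₗ[R] ↥(W₁ ⊔ W₂) :=
    (Submodule.inclusion (le_sup_left : W₁ ≤ W₁ ⊔ W₂)).comp (LinearMap.fst R ↥W₁ ↥W₂) +
      (Submodule.inclusion (le_sup_right : W₂ ≤ W₁ ⊔ W₂)).comp (LinearMap.snd R ↥W₁ ↥W₂)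
    with hφdef
  have hφ : Function.Surjective φ := by
    rintro ⟨z, hz⟩
    rcases Submodule.mem_sup.mp hz with ⟨y, hy, w, hw, hyw⟩
    refine ⟨⟨⟨y, hy⟩, ⟨w, hw⟩⟩, ?_⟩
    apply Subtype.ext
    simpa [hφdef, Submodule.inclusion] using hyw
  exact (h.sKerQuot (↥W₁ × ↥W₂) ↥(W₁ ⊔ W₂)
    (h.xProd ↥W₁ ↥W₂ (h.hsub M W₁ XM) (h.hsub M W₂ XM))
    (h.sProd ↥W₁ ↥W₂ s₁ s₂) φ hφ (h.hsub M (W₁ ⊔ W₂) XM)).2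

/-- For any ideal J, `J • ⊤` is in S whenever M is. -/
theorem sSmulTop (h : TFHyp R X S) {M : Type} [AddCommGroup M] [Module R M]
    (SM : S M) (J : Ideal R) : S ↥(J • (⊤ : Submodule R M)) := by
  have XM := h.hSX M SM
  have hJfg : J.FG := IsNoetherian.noetherian J
  refine Submodule.fg_induction (motive := fun J _ => S ↥(J • (⊤ : Submodule R M))) ?_ ?_ J hJfg
  · intro a
    -- span {a} • ⊤ = range (a • id)
    have key : (Ideal.span {a}) • (⊤ : Submodule R M) = LinearMap.range (a • LinearMap.id (R := R) (M := M)) := by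
      apply le_antisymm
      · refine Submodule.smul_le.mpr ?_
        intro r hr m _
        rcases Submodule.mem_span_singleton.mp hr with ⟨c, rfl⟩
        refine ⟨c • m, ?_⟩
        simp [mul_smul, smul_comm a c m]
      · rintro x ⟨m, rfl⟩
        exact Submodule.smul_mem_smul (Submodule.mem_span_singleton_self a) trivial
    have := (h.sKerQuot M ↥(LinearMap.range (a • LinearMap.id (R := R) (M := M))) XM SM
      ((a • LinearMap.id (R := R) (M := M)).rangeRestrict)
      (LinearMap.surjective_rangeRestrict _)
      (h.hsub M _ XM)).2
    exact h.sEq key.symm this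
  · intro J₁ J₂ _ _ h₁ h₂
    have e : (J₁ ⊔ J₂) • (⊤ : Submodule R M) = J₁ • (⊤ : Submodule R M) ⊔ J₂ • (⊤ : Submodule R M) := by
      apply le_antisymm
      · refine Submodule.smul_le.mpr ?_
        intro r hr m hm
        rcases Submodule.mem_sup.mp hr with ⟨r₁, hr₁, r₂, hr₂, rfl⟩
        rw [add_smul]
        exact Submodule.add_mem _
          (Submodule.mem_sup_left (Submodule.smul_mem_smul hr₁ hm))
          (Submodule.mem_sup_right (Submodule.smul_mem_smul hr₂ hm))
      · exact sup_le (Submodule.smul_mono_left le_sup_left) (Submodule.smul_mono_left le_sup_right)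
    exact h.sEq e.symm (h.sSup XM _ _ h₁ h₂)


/-- One-step lemma: if `S M` and `N` is a submodule with `M = N + R•x`, then `S N`. -/
theorem os (h : TFHyp R X S) {M : Type} [AddCommGroup M] [Module R M] (SM : S M)
    (N : Submodule R M) (x : M) (hx : ∀ m : M, ∃ n ∈ N, ∃ r : R, m = n + r • x) :
    S ↥N := by
  have XM := h.hSX M SM
  set J : Ideal R := Submodule.comap (LinearMap.toSpanSingleton R M x) N with hJ
  have hmemJ : ∀ r : R, r ∈ J ↔ r • x ∈ N := by
    intro r
    simp [hJ]
  set JM : Submodule R M := J • (⊤ : Submodule R M) with hJM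
  have hJMN : JM ≤ N := by
    rw [hJM]
    refine Submodule.smul_le.mpr ?_
    intro r hr m _
    rcases hx m with ⟨n, hn, c, rfl⟩
    have hrx : r • x ∈ N := (hmemJ r).mp hr
    have e : r • (n + c • x) = r • n + c • (r • x) := by
      rw [smul_add, smul_comm]
    rw [e]
    exact N.add_mem (N.smul_mem r hn) (N.smul_mem c hrx)
  have SJM : S ↥JM := h.sSmulTop SM J
  -- the auxiliary pullback module B inside M × M
  set B : Submodule R (M × M) :=
    { carrier := {p | p.2 ∈ N ∧ ∃ r : R, p.1 - r • x ∈ N ∧ p.1 - p.2 - r • x ∈ JM}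
      add_mem' := by
        intro a b ha hb
        obtain ⟨ha₂, r, har, ha'⟩ := ha
        obtain ⟨hb₂, t, hbt, hb'⟩ := hb
        refine ⟨N.add_mem ha₂ hb₂, r + t, ?_, ?_⟩
        · have e : (a + b).1 - (r + t) • x = (a.1 - r • x) + (b.1 - t • x) := by
            simp only [Prod.fst_add, add_smul]; abel
          rw [e]; exact N.add_mem har hbt
        · have e : (a + b).1 - (a + b).2 - (r + t) • x
              = (a.1 - a.2 - r • x) + (b.1 - b.2 - t • x) := by
            simp only [Prod.fst_add, Prod.snd_add, add_smul]; abel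
          rw [e]; exact JM.add_mem ha' hb'
      zero_mem' := ⟨N.zero_mem, 0, by simp, by simp⟩
      smul_mem' := by
        intro c a ha
        obtain ⟨ha₂, r, har, ha'⟩ := ha
        refine ⟨N.smul_mem c ha₂, c * r, ?_, ?_⟩
        · have e : (c • a).1 - (c * r) • x = c • (a.1 - r • x) := by
            simp only [Prod.smul_fst, smul_sub, mul_smul]
          rw [e]; exact N.smul_mem c har
        · have e : (c • a).1 - (c • a).2 - (c * r) • x = c • (a.1 - a.2 - r • x) := by
            simp only [Prod.smul_fst, Prod.smul_snd, smul_sub, mul_smul]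
          rw [e]; exact JM.smul_mem c ha' } with hB
  have memB : ∀ p : M × M, p ∈ B ↔
      (p.2 ∈ N ∧ ∃ r : R, p.1 - r • x ∈ N ∧ p.1 - p.2 - r • x ∈ JM) := by
    intro p; rfl
  have XMM : X (M × M) := h.xProd M M XM XM
  have XB : X ↥B := h.hsub (M × M) B XMM
  have XJM : X ↥JM := h.hsub M JM XM
  -- first conflation : 0 → JM → B → M → 0
  set π₁ : ↥B →ₗ[R] M := (LinearMap.fst R M M).comp B.subtype with hπ₁
  have hπ₁surj : Function.Surjective π₁ := by
    intro m
    rcases hx m with ⟨n, hn, r, hm⟩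
    have h1 : m - r • x ∈ N := by
      have : m - r • x = n := by rw [hm]; abel
      rw [this]; exact hn
    refine ⟨⟨(m, m - r • x), (memB _).mpr ⟨h1, r, h1, ?_⟩⟩, rfl⟩
    have : m - (m - r • x) - r • x = 0 := by abel
    rw [this]; exact JM.zero_mem
  set f₁ : ↥JM →ₗ[R] ↥B :=
    LinearMap.codRestrict B ((LinearMap.inr R M M).comp JM.subtype) (by
      intro j
      refine (memB _).mpr ⟨hJMN j.2, 0, ?_, ?_⟩
      · simpa using N.zero_mem
      · simpa using JM.neg_mem j.2) with hf₁
  have hf₁inj : Function.Injective f₁ := by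
    intro j j' hjj'
    apply Subtype.ext
    have := congrArg (fun b : ↥B => (b : M × M).2) hjj'
    simpa [hf₁] using this
  have hexact₁ : Function.Exact f₁ π₁ := by
    intro b
    constructor
    · intro hb0
      obtain ⟨⟨m, n⟩, hmem⟩ := b
      obtain ⟨hn, r, h1, h2⟩ := (memB _).mp hmem
      have hm0 : m = 0 := hb0
      subst hm0
      have hrx : r • x ∈ N := by
        have h1' : -(r • x) ∈ N := by simpa using h1
        simpa using N.neg_mem h1'
      have hrJ : r ∈ J := (hmemJ r).mpr hrx
      have hrxJM : r • x ∈ JM := by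
        rw [hJM]; exact Submodule.smul_mem_smul hrJ trivial
      have hnJM : n ∈ JM := by
        have h2' : -n - r • x ∈ JM := by simpa using h2
        have h3 : (-n - r • x) + r • x ∈ JM := JM.add_mem h2' hrxJM
        have h4 : -n ∈ JM := by
          have e : (-n - r • x) + r • x = -n := by abel
          rwa [e] at h3
        simpa using JM.neg_mem h4
      refine ⟨⟨n, hnJM⟩, ?_⟩
      apply Subtype.ext
      simp [hf₁]
    · rintro ⟨j, rfl⟩
      simp [hπ₁, hf₁]
  have SB : S ↥B := (h.hSerre ↥JM ↥B M f₁ π₁ hf₁inj hπ₁surj hexact₁ XJM XB XM).mpr ⟨SJM, SM⟩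
  -- second conflation : 0 → K₂ → B → N → 0
  set K₂ : Submodule R M := JM ⊔ Submodule.span R {x} with hK₂
  have XK₂ : X ↥K₂ := h.hsub M K₂ XM
  have XN : X ↥N := h.hsub M N XM
  set f₂ : ↥K₂ →ₗ[R] ↥B :=
    LinearMap.codRestrict B ((LinearMap.inl R M M).comp K₂.subtype) (by
      intro k
      have hk : (k : M) ∈ JM ⊔ Submodule.span R {x} := k.2
      rcases Submodule.mem_sup.mp hk with ⟨j, hj, w, hw, hjw⟩
      rcases Submodule.mem_span_singleton.mp hw with ⟨r, rfl⟩
      refine (memB _).mpr ⟨N.zero_mem, r, ?_, ?_⟩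
      · show (k : M) - r • x ∈ N
        have e : (k : M) - r • x = j := by rw [← hjw]; abel
        rw [e]; exact hJMN hj
      · show (k : M) - 0 - r • x ∈ JM
        have e : (k : M) - 0 - r • x = j := by rw [← hjw]; abel
        rw [e]; exact hj) with hf₂
  have hf₂inj : Function.Injective f₂ := by
    intro k k' hkk'
    apply Subtype.ext
    have := congrArg (fun b : ↥B => (b : M × M).1) hkk'
    simpa [hf₂] using this
  set π₂ : ↥B →ₗ[R] ↥N :=
    LinearMap.codRestrict N ((LinearMap.snd R M M).comp B.subtype) (by
      intro b
      exact ((memB _).mp b.2).1) with hπ₂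
  have hπ₂surj : Function.Surjective π₂ := by
    intro n
    refine ⟨⟨((n : M), (n : M)), (memB _).mpr ⟨n.2, 0, ?_, ?_⟩⟩, ?_⟩
    · simpa using n.2
    · simp
    · apply Subtype.ext
      rfl
  have hexact₂ : Function.Exact f₂ π₂ := by
    intro b
    constructor
    · intro hb0
      obtain ⟨⟨m, n⟩, hmem⟩ := b
      obtain ⟨hn, r, h1, h2⟩ := (memB _).mp hmem
      have hn0 : n = 0 := by
        have := congrArg (Subtype.val) hb0
        exact this
      subst hn0
      have h2' : m - r • x ∈ JM := by simpa using h2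
      have hmK : m ∈ K₂ := by
        show m ∈ JM ⊔ Submodule.span R {x}
        refine Submodule.mem_sup.mpr ⟨m - r • x, h2', r • x,
          Submodule.smul_mem _ r (Submodule.mem_span_singleton_self x), by abel⟩
      refine ⟨⟨m, hmK⟩, ?_⟩
      apply Subtype.ext
      apply Prod.ext
      · simp [hf₂]
      · simp [hf₂]
    · rintro ⟨k, rfl⟩
      apply Subtype.ext
      rfl
  exact ((h.hSerre ↥K₂ ↥B ↥N f₂ π₂ hf₂inj hπ₂surj hexact₂ XK₂ XB XN).mp SB).2


/-- S is closed under submodules. -/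
theorem sSub (h : TFHyp R X S) {M : Type} [AddCommGroup M] [Module R M] (SM : S M)
    (N : Submodule R M) : S ↥N := by
  have XM := h.hSX M SM
  have hfin : Module.Finite R M := h.hfg M XM
  obtain ⟨n, s, hs⟩ := Module.Finite.exists_fin (R := R) (M := M)
  set G : ℕ → Submodule R M := fun i => N ⊔ Submodule.span R (s '' {j | (j : ℕ) < i}) with hG
  have hmono : ∀ i, G i ≤ G (i + 1) := by
    intro i
    show N ⊔ Submodule.span R (s '' {j | (j : ℕ) < i})
        ≤ N ⊔ Submodule.span R (s '' {j | (j : ℕ) < i + 1})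
    refine sup_le_sup_left ?_ N
    refine Submodule.span_mono (Set.image_mono ?_)
    intro j hj
    exact Nat.lt_succ_of_lt hj
  have hstep : ∀ i, S ↥(G (i + 1)) → S ↥(G i) := by
    intro i hSi
    by_cases hi : i < n
    · have himg : s '' {j | (j : ℕ) < i + 1} = s '' {j | (j : ℕ) < i} ∪ {s ⟨i, hi⟩} := by
        ext y
        constructor
        · rintro ⟨j, hj, rfl⟩
          rcases Nat.lt_succ_iff_lt_or_eq.mp hj with hj' | hj'
          · exact Or.inl ⟨j, hj', rfl⟩
          · refine Or.inr ?_
            have hje : j = ⟨i, hi⟩ := Fin.ext hj'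
            rw [hje]
            rfl
        · rintro (⟨j, hj, rfl⟩ | hy)
          · exact ⟨j, Nat.lt_succ_of_lt hj, rfl⟩
          · rw [Set.mem_singleton_iff] at hy
            exact ⟨⟨i, hi⟩, Nat.lt_succ_self i, hy.symm⟩
      have hGsup : G (i + 1) = G i ⊔ Submodule.span R {s ⟨i, hi⟩} := by
        show N ⊔ Submodule.span R (s '' {j | (j : ℕ) < i + 1})
            = (N ⊔ Submodule.span R (s '' {j | (j : ℕ) < i})) ⊔ Submodule.span R {s ⟨i, hi⟩}
        rw [himg, Submodule.span_union, sup_assoc]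
      have hxmem : s ⟨i, hi⟩ ∈ G (i + 1) := by
        rw [hGsup]
        exact Submodule.mem_sup_right (Submodule.mem_span_singleton_self _)
      have hx' : ∀ m : ↥(G (i + 1)), ∃ nn ∈ Submodule.comap (G (i + 1)).subtype (G i),
          ∃ r : R, m = nn + r • (⟨s ⟨i, hi⟩, hxmem⟩ : ↥(G (i + 1))) := by
        intro m
        have hm : (m : M) ∈ G i ⊔ Submodule.span R {s ⟨i, hi⟩} := by
          rw [← hGsup]; exact m.2
        rcases Submodule.mem_sup.mp hm with ⟨a, ha, w, hw, haw⟩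
        rcases Submodule.mem_span_singleton.mp hw with ⟨r, rfl⟩
        refine ⟨⟨a, (hmono i) ha⟩, ha, r, ?_⟩
        apply Subtype.ext
        show (m : M) = a + r • s ⟨i, hi⟩
        exact haw.symm
      have hos := h.os hSi (Submodule.comap (G (i + 1)).subtype (G i)) _ hx'
      exact h.hSiso _ _ (Submodule.comapSubtypeEquivOfLe (hmono i)) hos
    · have e : G (i + 1) = G i := by
        have hset : {j : Fin n | (j : ℕ) < i + 1} = {j : Fin n | (j : ℕ) < i} := by
          ext j
          have hj : (j : ℕ) < n := j.2
          have hn : n ≤ i := Nat.le_of_not_lt hi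
          simp only [Set.mem_setOf_eq]
          constructor
          · intro _
            exact lt_of_lt_of_le hj hn
          · intro hh
            exact Nat.lt_succ_of_lt hh
        show N ⊔ Submodule.span R (s '' {j | (j : ℕ) < i + 1})
            = N ⊔ Submodule.span R (s '' {j | (j : ℕ) < i})
        rw [hset]
      exact h.sEq e hSi
  have htop : G n = ⊤ := by
    have huniv : {j : Fin n | (j : ℕ) < n} = Set.univ := by
      ext j
      simpa using j.2
    show N ⊔ Submodule.span R (s '' {j | (j : ℕ) < n}) = ⊤
    rw [huniv, Set.image_univ, hs, sup_top_eq]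
  have hGn : S ↥(G n) := by
    refine h.hSiso M ↥(G n) ?_ SM
    exact (LinearEquiv.ofEq _ _ htop ≪≫ₗ Submodule.topEquiv).symm
  have hdesc : ∀ i, S ↥(G i) → S ↥(G 0) := by
    intro i
    induction i with
    | zero => exact id
    | succ k ih =>
      intro hk
      exact ih (hstep k hk)
  have hG0 : G 0 = N := by
    have hempty : {j : Fin n | (j : ℕ) < 0} = ∅ := by
      ext j
      simp
    show N ⊔ Submodule.span R (s '' {j | (j : ℕ) < 0}) = N
    rw [hempty, Set.image_empty, Submodule.span_empty, sup_bot_eq]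
  exact h.sEq hG0 (hdesc n hGn)

end TFHyp

end Aux


/-- Let `R` be commutative noetherian, `X` a torsionfree class of finitely generated
`R`-modules, and `S` a Serre subcategory of `X` (with respect to conflations, i.e. short
exact sequences with all three terms in `X`). Then `S` is itself closed under submodules
and extensions in the category of finitely generated `R`-modules; in particular `S` is a
torsionfree class. -/
theorem serre_of_torsionfree_class_is_torsionfree_class
    (R : Type) [CommRing R] [IsNoetherianRing R]
    (X S : ∀ (M : Type) [AddCommGroup M] [Module R M], Prop)
    (hfg : ∀ (M : Type) [AddCommGroup M] [Module R M], X M → Module.Finite R M)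
    (hiso : ∀ (M N : Type) [AddCommGroup M] [Module R M] [AddCommGroup N] [Module R N],
      (M ≃ₗ[R] N) → X M → X N)
    (hsub : ∀ (M : Type) [AddCommGroup M] [Module R M] (N : Submodule R M), X M → X ↥N)
    (hext : ∀ (A B C : Type) [AddCommGroup A] [Module R A] [AddCommGroup B] [Module R B]
        [AddCommGroup C] [Module R C] (f : A →ₗ[R] B) (g : B →ₗ[R] C),
      Function.Injective f → Function.Surjective g → Function.Exact f g → X A → X C → X B)
    (hSX : ∀ (M : Type) [AddCommGroup M] [Module R M], S M → X M)
    (hSiso : ∀ (M N : Type) [AddCommGroup M] [Module R M] [AddCommGroup N] [Module R N],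
      (M ≃ₗ[R] N) → S M → S N)
    (hSzero : ∀ (M : Type) [AddCommGroup M] [Module R M], Subsingleton M → S M)
    (hSerre : ∀ (A B C : Type) [AddCommGroup A] [Module R A] [AddCommGroup B] [Module R B]
        [AddCommGroup C] [Module R C] (f : A →ₗ[R] B) (g : B →ₗ[R] C),
      Function.Injective f → Function.Surjective g → Function.Exact f g →
      X A → X B → X C → (S B ↔ (S A ∧ S C))) :
    (∀ (M : Type) [AddCommGroup M] [Module R M] (N : Submodule R M), S M → S ↥N) ∧
    (∀ (A B C : Type) [AddCommGroup A] [Module R A] [AddCommGroup B] [Module R B]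
        [AddCommGroup C] [Module R C] (f : A →ₗ[R] B) (g : B →ₗ[R] C),
      Function.Injective f → Function.Surjective g → Function.Exact f g →
      S A → S C → S B) := by
  have h : TFHyp R X S := ⟨hfg, hsub, hext, hSX, hSiso, hSzero, hSerre⟩
  constructor
  · intro M _ _ N hS
    exact h.sSub hS N
  · intro A B C _ _ _ _ _ _ f g hf hg he sa sc
    exact h.sExt A B C f g hf hg he sa sc
end

section
/- Let R be a commutative noetherian ring, X a torsionfree class of finitely generated R-modules, and S a Serre subcategory of X. Then Ass S is specialization-closed in Ass X: if p ∈ Ass S, q ∈ Ass X, and p ⊆ q, then q ∈ Ass S. -/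
set_option maxHeartbeats 1000000

section AuxSerre

variable {R : Type} [CommRing R]

/-- A linear equivalence between two subsingleton modules. -/
noncomputable def auxSubsingletonLEquiv (M N : Type) [AddCommGroup M] [Module R M]
    [AddCommGroup N] [Module R N] (hM : ∀ z : M, z = 0) (hN : ∀ z : N, z = 0) :
    M ≃ₗ[R] N where
  toFun _ := 0
  map_add' _ _ := by rw [add_zero]
  map_smul' _ _ := by rw [RingHom.id_apply, smul_zero]
  invFun _ := 0
  left_inv z := ((hM z).symm : _)
  right_inv z := ((hN z).symm : _)

/-- In a noetherian ring, every nonzero element of a module has a multiple whose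
annihilator is prime. -/
lemma aux_exists_prime_ann [IsNoetherianRing R] (L : Type) [AddCommGroup L] [Module R L]
    (z : L) (hz : z ≠ 0) :
    ∃ t : R, t • z ≠ 0 ∧
      Ideal.IsPrime (LinearMap.ker (LinearMap.toSpanSingleton R L (t • z))) := by
  set A : Set (Ideal R) :=
    {I | ∃ t : R, t • z ≠ 0 ∧ I = LinearMap.ker (LinearMap.toSpanSingleton R L (t • z))} with hA
  have hne : A.Nonempty := ⟨_, 1, by rwa [one_smul], rfl⟩
  obtain ⟨J, hJA, hmax⟩ :=
    (set_has_maximal_iff_noetherian.mpr (inferInstance : IsNoetherian R R)) A hne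
  obtain ⟨t₀, ht₀, hJ⟩ := hJA
  refine ⟨t₀, ht₀, ?_⟩
  have hmem : ∀ r : R, r ∈ LinearMap.ker (LinearMap.toSpanSingleton R L (t₀ • z)) ↔
      r • t₀ • z = 0 := fun r => by
    rw [LinearMap.mem_ker, LinearMap.toSpanSingleton_apply]
  constructor
  · intro htop
    have h1 : (1 : R) • t₀ • z = 0 := (hmem 1).mp (htop ▸ Submodule.mem_top)
    rw [one_smul] at h1
    exact ht₀ h1
  · intro a b hab
    by_contra hcon
    push_neg at hcon
    obtain ⟨ha, hb⟩ := hcon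
    have hbz : (b * t₀) • z ≠ 0 := by
      rw [mul_smul]
      intro h
      exact hb (hJ ▸ (hmem b).mpr h)
    set J' := LinearMap.ker (LinearMap.toSpanSingleton R L ((b * t₀) • z)) with hJ'
    have hmem' : ∀ r : R, r ∈ J' ↔ r • (b * t₀) • z = 0 := fun r => by
      rw [hJ', LinearMap.mem_ker, LinearMap.toSpanSingleton_apply]
    have hle : J ≤ J' := by
      intro r hr
      rw [hJ, hmem] at hr
      rw [hmem', mul_smul, smul_comm r b (t₀ • z), hr, smul_zero]
    have haJ' : a ∈ J' := by
      rw [hmem', mul_smul, ← mul_smul a b (t₀ • z)]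
      exact (hmem (a * b)).mp (hJ ▸ hab)
    have haJ : a ∉ J := fun h => ha ((hJ ▸ h : _))
    exact hmax J' ⟨b * t₀, hbz, rfl⟩ (lt_of_le_of_ne hle (fun h => haJ (h ▸ haJ')))

end AuxSerre


section AuxSerre2

variable {R : Type} [CommRing R] [IsNoetherianRing R]
variable (X : ∀ (M : Type) [AddCommGroup M] [Module R M], Prop)

/-- Subsingleton modules belong to `X`, as soon as `X` is nonempty and closed under
submodules and isomorphisms. -/
lemma aux_X_subsing
    (hiso : ∀ (M N : Type) [AddCommGroup M] [Module R M] [AddCommGroup N] [Module R N],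
      (M ≃ₗ[R] N) → X M → X N)
    (hsub : ∀ (M : Type) [AddCommGroup M] [Module R M] (N : Submodule R M), X M → X ↥N)
    (Nw : Type) [AddCommGroup Nw] [Module R Nw] (hXN : X Nw)
    (T : Type) [AddCommGroup T] [Module R T] (hT : ∀ z : T, z = 0) : X T := by
  have hbot : X ↥(⊥ : Submodule R Nw) := hsub Nw ⊥ hXN
  refine hiso _ _ (auxSubsingletonLEquiv _ _ (fun z => ?_) hT) hbot
  exact Subtype.ext ((Submodule.mem_bot R).mp z.2)

/-- A finitely generated module that is annihilated by the prime `q` and torsion-free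
over `R/q` lies in `X`, provided `X` contains a module with an element of annihilator
exactly `q`. -/
lemma aux_tf_mem
    (hiso : ∀ (M N : Type) [AddCommGroup M] [Module R M] [AddCommGroup N] [Module R N],
      (M ≃ₗ[R] N) → X M → X N)
    (hsub : ∀ (M : Type) [AddCommGroup M] [Module R M] (N : Submodule R M), X M → X ↥N)
    (hext : ∀ (A B C : Type) [AddCommGroup A] [Module R A] [AddCommGroup B] [Module R B]
        [AddCommGroup C] [Module R C] (f : A →ₗ[R] B) (g : B →ₗ[R] C),
      Function.Injective f → Function.Surjective g → Function.Exact f g → X A → X C → X B)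
    (q : Ideal R) (hq : q.IsPrime)
    (Nw : Type) [AddCommGroup Nw] [Module R Nw] (hXN : X Nw) (y : Nw)
    (hy : LinearMap.ker (LinearMap.toSpanSingleton R Nw y) = q) :
    ∀ (n : ℕ) (T : Type) (iT : AddCommGroup T) (mT : @Module R T _ iT.toAddCommMonoid),
      (∃ s : Finset T, s.card ≤ n ∧ Submodule.span R (s : Set T) = ⊤) →
      (∀ a ∈ q, ∀ z : T, a • z = 0) →
      (∀ (r : R) (z : T), r ∉ q → r • z = 0 → z = 0) → X T := by
  intro n
  induction n with
  | zero =>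
    intro T iT mT ⟨s, hcard, hspan⟩ _ _
    have hs : s = ∅ := Finset.card_eq_zero.mp (Nat.le_zero.mp hcard)
    rw [hs] at hspan
    refine aux_X_subsing X hiso hsub Nw hXN T (fun z => ?_)
    have : z ∈ (⊤ : Submodule R T) := Submodule.mem_top
    rw [← hspan, Finset.coe_empty, Submodule.span_empty] at this
    exact (Submodule.mem_bot R).mp this
  | succ n ih =>
    intro T iT mT ⟨s, hcard, hspan⟩ hkill htf
    by_cases hex : ∃ t ∈ s, t ≠ 0
    · obtain ⟨t, hts, htne⟩ := hex
      -- the annihilator of t is exactly q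
      have kert : LinearMap.ker (LinearMap.toSpanSingleton R T t) = q := by
        ext r
        rw [LinearMap.mem_ker, LinearMap.toSpanSingleton_apply]
        constructor
        · intro h
          by_contra hr
          exact htne (htf r t hr h)
        · intro h
          exact hkill r h t
      haveI : Module.Finite R T := ⟨⟨s, hspan⟩⟩
      haveI : IsNoetherian R T := isNoetherian_of_isNoetherianRing_of_finite R T
      -- the saturation of R•t
      set rg := LinearMap.range (LinearMap.toSpanSingleton R T t) with hrg
      set T₁ : Submodule R T :=
        { carrier := {z | ∃ d : R, d ∉ q ∧ d • z ∈ rg}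
          add_mem' := by
            rintro z₁ z₂ ⟨d₁, hd₁, hm₁⟩ ⟨d₂, hd₂, hm₂⟩
            refine ⟨d₁ * d₂, fun h => ((hq.mem_or_mem h).elim hd₁ hd₂), ?_⟩
            rw [smul_add]
            refine Submodule.add_mem _ ?_ ?_
            · rw [mul_comm, mul_smul]
              exact Submodule.smul_mem _ _ hm₁
            · rw [mul_smul]
              exact Submodule.smul_mem _ _ hm₂
          zero_mem' := ⟨1, fun h => hq.ne_top (Ideal.eq_top_of_isUnit_mem _ h isUnit_one),
            by rw [smul_zero]; exact Submodule.zero_mem _⟩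
          smul_mem' := by
            rintro c z ⟨d, hd, hm⟩
            exact ⟨d, hd, by rw [smul_comm]; exact Submodule.smul_mem _ _ hm⟩ } with hT₁
      have hT₁mem : ∀ z : T, z ∈ T₁ ↔ ∃ d : R, d ∉ q ∧ d • z ∈ rg := fun z => Iff.rfl
      have htT₁ : t ∈ T₁ := by
        refine (hT₁mem t).mpr ⟨1, fun h => hq.ne_top (Ideal.eq_top_of_isUnit_mem _ h isUnit_one),
          ⟨1, ?_⟩⟩
        rw [LinearMap.toSpanSingleton_apply, one_smul]
      -- T₁ embeds into Nw
      obtain ⟨u, hu⟩ := (IsNoetherian.noetherian T₁ : T₁.FG)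
      have humem : ∀ w ∈ u, w ∈ T₁ := fun w hw => hu ▸ Submodule.subset_span hw
      classical
      set dfun : T → R := fun w =>
        if h : ∃ d : R, d ∉ q ∧ d • w ∈ rg then h.choose else 1 with hdfun
      set d : R := ∏ w ∈ u, dfun w with hd
      have hdw : ∀ w ∈ u, dfun w ∉ q ∧ dfun w • w ∈ rg := by
        intro w hw
        have h := (hT₁mem w).mp (humem w hw)
        simp only [hdfun, dif_pos h]
        exact h.choose_spec
      have hdq : d ∉ q := by
        rw [hd]
        refine Finset.prod_induction dfun (fun r => r ∉ q)
          (fun a b ha hb h => ((hq.mem_or_mem h).elim ha hb))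
          (fun h => hq.ne_top (Ideal.eq_top_of_isUnit_mem _ h isUnit_one))
          (fun w hw => (hdw w hw).1)
      have hdmem : ∀ z ∈ T₁, d • z ∈ rg := by
        intro z hz
        rw [← hu] at hz
        induction hz using Submodule.span_induction with
        | mem w hw =>
          rw [hd, ← Finset.mul_prod_erase u dfun hw, mul_comm, mul_smul]
          exact Submodule.smul_mem _ _ (hdw w hw).2
        | zero => rw [smul_zero]; exact Submodule.zero_mem _
        | add z₁ z₂ h₁ h₂ ih₁ ih₂ => rw [smul_add]; exact Submodule.add_mem _ ih₁ ih₂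
        | smul c z₁ h₁ ih₁ => rw [smul_comm]; exact Submodule.smul_mem _ _ ih₁
      set φ : T₁ →ₗ[R] ↥rg :=
        LinearMap.codRestrict rg ((LinearMap.lsmul R T d).comp T₁.subtype)
          (fun z => hdmem z.1 z.2) with hφ
      have hφinj : Function.Injective φ := by
        intro z₁ z₂ h
        have h' : d • (z₁ : T) = d • (z₂ : T) := congrArg Subtype.val h
        have : d • ((z₁ : T) - (z₂ : T)) = 0 := by rw [smul_sub, h', sub_self]
        have := htf d _ hdq this
        exact Subtype.ext (sub_eq_zero.mp this)
      set e : ↥rg ≃ₗ[R] ↥(LinearMap.range (LinearMap.toSpanSingleton R Nw y)) :=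
        (LinearMap.quotKerEquivRange (LinearMap.toSpanSingleton R T t)).symm ≪≫ₗ
          (Submodule.quotEquivOfEq _ _ (by rw [kert, hy])) ≪≫ₗ
          (LinearMap.quotKerEquivRange (LinearMap.toSpanSingleton R Nw y)) with he
      set σ : T₁ →ₗ[R] Nw :=
        (LinearMap.range (LinearMap.toSpanSingleton R Nw y)).subtype.comp
          (e.toLinearMap.comp φ) with hσ
      have hσinj : Function.Injective σ := by
        rw [hσ]
        rw [LinearMap.coe_comp, LinearMap.coe_comp]
        exact (Submodule.injective_subtype _).comp (e.injective.comp hφinj)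
      have hXT₁ : X ↥T₁ := by
        have hX1 : X ↥(LinearMap.range σ) := hsub Nw _ hXN
        exact hiso _ _ (LinearEquiv.ofInjective σ hσinj).symm hX1
      -- the quotient T ⧸ T₁
      set T' := T ⧸ T₁ with hT'
      have hkill' : ∀ a ∈ q, ∀ v : T', a • v = 0 := by
        intro a ha v
        obtain ⟨z, rfl⟩ := T₁.mkQ_surjective v
        rw [← map_smul, hkill a ha z, map_zero]
      have htf' : ∀ (r : R) (v : T'), r ∉ q → r • v = 0 → v = 0 := by
        intro r v hr hrv
        obtain ⟨z, rfl⟩ := T₁.mkQ_surjective v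
        rw [← map_smul] at hrv
        have hz : r • z ∈ T₁ := by
          rwa [Submodule.mkQ_apply, Submodule.Quotient.mk_eq_zero] at hrv
        obtain ⟨dd, hdd, hddm⟩ := (hT₁mem _).mp hz
        have : z ∈ T₁ := (hT₁mem z).mpr
          ⟨dd * r, fun h => ((hq.mem_or_mem h).elim hdd hr), by rwa [mul_smul]⟩
        rw [Submodule.mkQ_apply, Submodule.Quotient.mk_eq_zero]
        exact this
      have hspan' : ∃ s' : Finset T', s'.card ≤ n ∧ Submodule.span R (s' : Set T') = ⊤ := by
        refine ⟨(s.erase t).image T₁.mkQ, ?_, ?_⟩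
        · exact (Finset.card_image_le).trans (by
            rw [Finset.card_erase_of_mem hts]
            omega)
        · have h1 : Submodule.span R (T₁.mkQ '' (s : Set T)) = ⊤ := by
            rw [← Submodule.map_span, hspan, Submodule.map_top, Submodule.range_mkQ]
          have h2 : (s : Set T) = insert t ((s.erase t : Finset T) : Set T) := by
            rw [Finset.coe_erase, Set.insert_diff_singleton,
              Set.insert_eq_self.mpr (by exact_mod_cast hts)]
          rw [h2, Set.image_insert_eq] at h1
          have h3 : T₁.mkQ t = 0 := by
            rw [Submodule.mkQ_apply, Submodule.Quotient.mk_eq_zero]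
            exact htT₁
          rw [h3, Submodule.span_insert_zero] at h1
          rw [Finset.coe_image]
          exact h1
      have hXT' : X T' := ih T' _ _ hspan' hkill' htf'
      exact hext ↥T₁ T T' T₁.subtype T₁.mkQ (Submodule.injective_subtype T₁)
        (T₁.mkQ_surjective) (LinearMap.exact_subtype_mkQ T₁) hXT₁ hXT'
    · push_neg at hex
      refine aux_X_subsing X hiso hsub Nw hXN T (fun z => ?_)
      have : z ∈ (⊤ : Submodule R T) := Submodule.mem_top
      rw [← hspan, Submodule.span_eq_bot.mpr (fun w hw => hex w (by exact_mod_cast hw))] at this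
      exact (Submodule.mem_bot R).mp this

end AuxSerre2

section AuxSerre3

variable {R : Type} [CommRing R] [IsNoetherianRing R]
variable (X : ∀ (M : Type) [AddCommGroup M] [Module R M], Prop)

set_option linter.unusedSectionVars false

/-- A f.g. module all of whose "element primes" are equal to `q` lies in `X`. -/
lemma aux_copr_mem
    (hiso : ∀ (M N : Type) [AddCommGroup M] [Module R M] [AddCommGroup N] [Module R N],
      (M ≃ₗ[R] N) → X M → X N)
    (hsub : ∀ (M : Type) [AddCommGroup M] [Module R M] (N : Submodule R M), X M → X ↥N)
    (hext : ∀ (A B C : Type) [AddCommGroup A] [Module R A] [AddCommGroup B] [Module R B]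
        [AddCommGroup C] [Module R C] (f : A →ₗ[R] B) (g : B →ₗ[R] C),
      Function.Injective f → Function.Surjective g → Function.Exact f g → X A → X C → X B)
    (q : Ideal R) (hq : q.IsPrime)
    (Nw : Type) [AddCommGroup Nw] [Module R Nw] (hXN : X Nw) (y : Nw)
    (hy : LinearMap.ker (LinearMap.toSpanSingleton R Nw y) = q)
    (L : Type) [AddCommGroup L] [Module R L] [Module.Finite R L]
    (Hp : ∀ w : L, w ≠ 0 → Ideal.IsPrime (LinearMap.ker (LinearMap.toSpanSingleton R L w)) →
      LinearMap.ker (LinearMap.toSpanSingleton R L w) = q) : X L := by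
  haveI : IsNoetherian R L := isNoetherian_of_isNoetherianRing_of_finite R L
  -- zerodivisors on L lie in q
  have hzd : ∀ (r : R) (z : L), z ≠ 0 → r • z = 0 → r ∈ q := by
    intro r z hz hrz
    obtain ⟨t, htz, htp⟩ := aux_exists_prime_ann (R := R) L z hz
    rw [← Hp _ htz htp]
    rw [LinearMap.mem_ker, LinearMap.toSpanSingleton_apply, smul_comm, hrz, smul_zero]
  -- every element of L is killed by a power of each element of q
  have hpow : ∀ a ∈ q, ∀ z : L, ∃ m : ℕ, a ^ m • z = 0 := by
    intro a ha z
    have gmono : Monotone (fun m : ℕ => LinearMap.ker (LinearMap.toSpanSingleton R L (a ^ m • z))) := by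
      apply monotone_nat_of_le_succ
      intro m r hr
      rw [LinearMap.mem_ker, LinearMap.toSpanSingleton_apply] at hr ⊢
      rw [pow_succ, mul_smul, smul_comm (a ^ m) a z, smul_comm r a (a ^ m • z), hr, smul_zero]
    obtain ⟨m, hm⟩ := (monotone_stabilizes_iff_noetherian.mpr
      (inferInstance : IsNoetherian R R)) ⟨_, gmono⟩
    refine ⟨m, ?_⟩
    by_contra hne
    obtain ⟨t, htw, htp⟩ := aux_exists_prime_ann (R := R) L (a ^ m • z) hne
    have haq : a ∈ LinearMap.ker (LinearMap.toSpanSingleton R L (t • a ^ m • z)) :=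
      (Hp _ htw htp) ▸ ha
    rw [LinearMap.mem_ker, LinearMap.toSpanSingleton_apply] at haq
    have hgm : LinearMap.ker (LinearMap.toSpanSingleton R L (a ^ m • z))
        = LinearMap.ker (LinearMap.toSpanSingleton R L (a ^ (m + 1) • z)) :=
      hm (m + 1) (Nat.le_succ m)
    have htg : t ∈ LinearMap.ker (LinearMap.toSpanSingleton R L (a ^ (m + 1) • z)) := by
      rw [LinearMap.mem_ker, LinearMap.toSpanSingleton_apply, pow_succ, mul_smul,
        smul_comm (a ^ m) a z, smul_comm t a (a ^ m • z)]
      exact haq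
    rw [← hgm, LinearMap.mem_ker, LinearMap.toSpanSingleton_apply] at htg
    exact htw htg
  -- the filtration by q-power torsion
  set C : ℕ → Submodule R L :=
    fun i => Submodule.torsionBySet R L ((q ^ i : Ideal R) : Set R) with hC
  have hCmem : ∀ (i : ℕ) (z : L), z ∈ C i ↔ ∀ b ∈ (q ^ i : Ideal R), b • z = 0 := by
    intro i z
    rw [hC]
    rw [Submodule.mem_torsionBySet_iff]
    constructor
    · intro h b hb; exact h ⟨b, hb⟩
    · intro h b; exact h b.1 b.2
  have hCmono : Monotone C := by
    intro i j hij z hz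
    rw [hCmem] at hz ⊢
    intro b hb
    exact hz b (Ideal.pow_le_pow_right hij hb)
  obtain ⟨n, hn⟩ := (monotone_stabilizes_iff_noetherian.mpr
    (inferInstance : IsNoetherian R L)) ⟨C, hCmono⟩
  -- the filtration is exhaustive
  have hCtop : C n = ⊤ := by
    by_contra hne
    have hex : ∃ z : L, z ∉ C n := by
      by_contra h
      push_neg at h
      exact hne (eq_top_iff.mpr (fun z _ => h z))
    obtain ⟨z, hz⟩ := hex
    have hz' : (C n).mkQ z ≠ 0 := by
      rw [Submodule.mkQ_apply, ne_eq, Submodule.Quotient.mk_eq_zero]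
      exact hz
    have hpow' : ∀ a ∈ q, ∀ v : L ⧸ C n, ∃ m : ℕ, a ^ m • v = 0 := by
      intro a ha v
      obtain ⟨u, rfl⟩ := (C n).mkQ_surjective v
      obtain ⟨m, hm⟩ := hpow a ha u
      exact ⟨m, by rw [← map_smul, hm, map_zero]⟩
    have step : ∀ (a : R) (m : ℕ) (w : L ⧸ C n), w ≠ 0 → a ^ m • w = 0 →
        ∃ w' : L ⧸ C n, w' ≠ 0 ∧ a • w' = 0 ∧ ∀ b : R, b • w = 0 → b • w' = 0 := by
      intro a m
      induction m with
      | zero =>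
        intro w hw h0
        rw [pow_zero, one_smul] at h0
        exact absurd h0 hw
      | succ m ihm =>
        intro w hw hsucc
        by_cases h1 : a • w = 0
        · exact ⟨w, hw, h1, fun b hb => hb⟩
        · have h2 : a ^ m • (a • w) = 0 := by
            rw [← mul_smul, ← pow_succ]
            exact hsucc
          obtain ⟨w', hw', ha', hpres⟩ := ihm (a • w) h1 h2
          exact ⟨w', hw', ha', fun b hb => hpres b (by rw [smul_comm, hb, smul_zero])⟩
    obtain ⟨sgen, hsgen⟩ := (IsNoetherian.noetherian q : q.FG)
    have K : ∀ lst : List R, (∀ a ∈ lst, a ∈ q) → ∀ v : L ⧸ C n, v ≠ 0 →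
        ∃ w : L ⧸ C n, w ≠ 0 ∧ ∀ a ∈ lst, a • w = 0 := by
      intro lst
      induction lst with
      | nil => exact fun _ v hv => ⟨v, hv, by simp⟩
      | cons a rest ihl =>
        intro hmem v hv
        obtain ⟨w1, hw1, hkill⟩ := ihl (fun b hb => hmem b (List.mem_cons_of_mem a hb)) v hv
        obtain ⟨m, hm⟩ := hpow' a (hmem a List.mem_cons_self) w1
        obtain ⟨w', hw', ha', hpres⟩ := step a m w1 hw1 hm
        refine ⟨w', hw', fun b hb => ?_⟩
        rcases List.mem_cons.mp hb with hba | hbr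
        · rw [hba]; exact ha'
        · exact hpres b (hkill b hbr)
    obtain ⟨w, hw, hkills⟩ := K sgen.toList
      (fun a ha => hsgen ▸ Submodule.subset_span (by simpa using ha)) _ hz'
    have hkillq : ∀ a ∈ q, a • w = 0 := by
      intro a ha
      rw [← hsgen] at ha
      induction ha using Submodule.span_induction with
      | mem b hb => exact hkills b (by simpa using hb)
      | zero => rw [zero_smul]
      | add b c hb hc ihb ihc => rw [add_smul, ihb, ihc, add_zero]
      | smul r b hb ihb => rw [smul_eq_mul, mul_smul, ihb, smul_zero]
    obtain ⟨w₀, rfl⟩ := (C n).mkQ_surjective w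
    have hw₀ : w₀ ∈ C (n + 1) := by
      rw [hCmem]
      intro b hb
      rw [pow_succ] at hb
      refine Submodule.mul_induction_on hb ?_ ?_
      · intro ξ hξ a ha
        have haw : a • w₀ ∈ C n := by
          have : (C n).mkQ (a • w₀) = 0 := by rw [map_smul]; exact hkillq a ha
          rwa [Submodule.mkQ_apply, Submodule.Quotient.mk_eq_zero] at this
        rw [mul_smul]
        exact (hCmem n _).mp haw ξ hξ
      · intro r₁ r₂ h₁ h₂
        rw [add_smul, h₁, h₂, add_zero]
    have hCeq : C n = C (n + 1) := hn (n + 1) (Nat.le_succ n)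
    rw [← hCeq] at hw₀
    exact hw (by rw [Submodule.mkQ_apply, Submodule.Quotient.mk_eq_zero]; exact hw₀)
  -- climb the filtration
  have hXCi : ∀ i : ℕ, X ↥(C i) := by
    intro i
    induction i with
    | zero =>
      refine aux_X_subsing X hiso hsub Nw hXN _ (fun z => ?_)
      have hz := (hCmem 0 z.1).mp z.2 1 (by rw [pow_zero, Ideal.one_eq_top]; exact trivial)
      rw [one_smul] at hz
      exact Subtype.ext hz
    | succ i ihi =>
      set Ki : Submodule R ↥(C (i + 1)) := Submodule.comap (C (i + 1)).subtype (C i) with hKi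
      set Ti := ↥(C (i + 1)) ⧸ Ki with hTi
      haveI : Module.Finite R ↥(C (i+1)) := Module.Finite.iff_fg.mpr (IsNoetherian.noetherian _)
      haveI : Module.Finite R Ti := Module.Finite.quotient R _
      have hkillTi : ∀ a ∈ q, ∀ v : Ti, a • v = 0 := by
        intro a ha v
        obtain ⟨zz, rfl⟩ := Ki.mkQ_surjective v
        rw [← map_smul, Submodule.mkQ_apply, Submodule.Quotient.mk_eq_zero]
        show (a • zz : ↥(C (i+1))).1 ∈ C i
        rw [hCmem]
        intro ξ hξ
        show ξ • (a • zz.1) = 0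
        rw [← mul_smul]
        exact (hCmem (i+1) zz.1).mp zz.2 (ξ * a) (by rw [pow_succ]; exact Ideal.mul_mem_mul hξ ha)
      have htfTi : ∀ (r : R) (v : Ti), r ∉ q → r • v = 0 → v = 0 := by
        intro r v hr hrv
        obtain ⟨zz, rfl⟩ := Ki.mkQ_surjective v
        rw [← map_smul, Submodule.mkQ_apply, Submodule.Quotient.mk_eq_zero] at hrv
        have hrz : (r • zz.1) ∈ C i := hrv
        rw [Submodule.mkQ_apply, Submodule.Quotient.mk_eq_zero]
        show zz.1 ∈ C i
        rw [hCmem]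
        intro ξ hξ
        by_cases hzz : ξ • zz.1 = 0
        · exact hzz
        · exfalso
          have : r • (ξ • zz.1) = 0 := by
            rw [smul_comm]
            exact (hCmem i _).mp hrz ξ hξ
          exact hr (hzd r _ hzz this)
      obtain ⟨sT, hsT⟩ := (Module.finite_def.mp ‹Module.Finite R Ti› : (⊤ : Submodule R Ti).FG)
      have hXTi : X Ti := aux_tf_mem X hiso hsub hext q hq Nw hXN y hy sT.card Ti _ _
        ⟨sT, le_rfl, hsT⟩ hkillTi htfTi
      refine hext ↥(C i) ↥(C (i + 1)) Ti (Submodule.inclusion (hCmono (Nat.le_succ i)))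
        Ki.mkQ (Submodule.inclusion_injective _) Ki.mkQ_surjective ?_ ihi hXTi
      intro v
      rw [Submodule.mkQ_apply, Submodule.Quotient.mk_eq_zero]
      constructor
      · intro hv
        exact ⟨⟨v.1, hv⟩, rfl⟩
      · rintro ⟨u, rfl⟩
        exact u.2
  exact hiso _ _ ((LinearEquiv.ofEq _ _ hCtop).trans (Submodule.topEquiv)) (hXCi n)

end AuxSerre3

/-- Let `R` be commutative noetherian, `X` a torsionfree class of finitely generated
`R`-modules, and `S` a Serre subcategory of `X`. Then `Ass S` is specialization-closed in
`Ass X`: if `p ∈ Ass S`, `q ∈ Ass X` and `p ⊆ q`, then `q ∈ Ass S`. -/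
theorem ass_serre_specialization_closed
    (R : Type) [CommRing R] [IsNoetherianRing R]
    (X S : ∀ (M : Type) [AddCommGroup M] [Module R M], Prop)
    (hfg : ∀ (M : Type) [AddCommGroup M] [Module R M], X M → Module.Finite R M)
    (hiso : ∀ (M N : Type) [AddCommGroup M] [Module R M] [AddCommGroup N] [Module R N],
      (M ≃ₗ[R] N) → X M → X N)
    (hsub : ∀ (M : Type) [AddCommGroup M] [Module R M] (N : Submodule R M), X M → X ↥N)
    (hext : ∀ (A B C : Type) [AddCommGroup A] [Module R A] [AddCommGroup B] [Module R B]
        [AddCommGroup C] [Module R C] (f : A →ₗ[R] B) (g : B →ₗ[R] C),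
      Function.Injective f → Function.Surjective g → Function.Exact f g → X A → X C → X B)
    (hSX : ∀ (M : Type) [AddCommGroup M] [Module R M], S M → X M)
    (hSiso : ∀ (M N : Type) [AddCommGroup M] [Module R M] [AddCommGroup N] [Module R N],
      (M ≃ₗ[R] N) → S M → S N)
    (hSzero : ∀ (M : Type) [AddCommGroup M] [Module R M], Subsingleton M → S M)
    (hSerre : ∀ (A B C : Type) [AddCommGroup A] [Module R A] [AddCommGroup B] [Module R B]
        [AddCommGroup C] [Module R C] (f : A →ₗ[R] B) (g : B →ₗ[R] C),
      Function.Injective f → Function.Surjective g → Function.Exact f g →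
      X A → X B → X C → (S B ↔ (S A ∧ S C))) :
    ∀ p ∈ assOfSubcat R S, ∀ q ∈ assOfSubcat R X, p ≤ q → q ∈ assOfSubcat R S := by
  rintro p ⟨M, iM, mM, hSM, hqprimeM⟩ q ⟨N, iN, mN, hXN, hqN⟩ hpq
  obtain ⟨hqprime, y, hyann⟩ := isAssociatedPrime_iff.mp hqN
  have hy : LinearMap.ker (LinearMap.toSpanSingleton R N y) = q := by
    ext r
    rw [LinearMap.mem_ker, LinearMap.toSpanSingleton_apply, hyann,
      Submodule.mem_colon_singleton, Submodule.mem_bot]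
  obtain ⟨hpprime, x, hxann⟩ := isAssociatedPrime_iff.mp hqprimeM
  have hx : ∀ r : R, r • x = 0 ↔ r ∈ p := by
    intro r
    rw [hxann, Submodule.mem_colon_singleton, Submodule.mem_bot]
  have hXM : X M := hSX M hSM
  haveI : Module.Finite R M := hfg M hXM
  haveI : IsNoetherian R M := isNoetherian_of_isNoetherianRing_of_finite R M
  -- the submodule q•x of M
  set Q : Submodule R M := Submodule.map (LinearMap.toSpanSingleton R M x) q with hQdef
  have hQmem : ∀ z : M, z ∈ Q ↔ ∃ s ∈ q, s • x = z := by
    intro z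
    rw [hQdef, Submodule.mem_map]
    constructor
    · rintro ⟨s, hs, rfl⟩; exact ⟨s, hs, (LinearMap.toSpanSingleton_apply R M x s).symm⟩
    · rintro ⟨s, hs, hz⟩; exact ⟨s, hs, by rw [LinearMap.toSpanSingleton_apply]; exact hz⟩
  -- a maximal submodule A with A ⊓ R∙x = q•x
  set fam : Set (Submodule R M) := {W | Q ≤ W ∧ W ⊓ (R ∙ x) ≤ Q} with hfam
  have hfamne : fam.Nonempty := ⟨Q, le_rfl, inf_le_left⟩
  obtain ⟨A, hAfam, hAmax⟩ :=
    (set_has_maximal_iff_noetherian.mpr (inferInstance : IsNoetherian R M)) fam hfamne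
  -- the quotient module L
  set L := M ⧸ A with hL
  haveI : Module.Finite R L := Module.Finite.quotient R A
  -- the annihilator of the image of x is exactly q
  have hxbar : ∀ r : R, r • A.mkQ x = 0 ↔ r ∈ q := by
    intro r
    rw [← map_smul, Submodule.mkQ_apply, Submodule.Quotient.mk_eq_zero]
    constructor
    · intro h
      have hmem : r • x ∈ A ⊓ (R ∙ x) :=
        ⟨h, Submodule.mem_span_singleton.mpr ⟨r, rfl⟩⟩
      obtain ⟨s, hs, hsx⟩ := (hQmem _).mp (hAfam.2 hmem)
      have : (r - s) • x = 0 := by rw [sub_smul, hsx, sub_self]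
      have hrs : r - s ∈ q := hpq ((hx _).mp this)
      have : r = (r - s) + s := by ring
      rw [this]
      exact Ideal.add_mem q hrs hs
    · intro h
      exact hAfam.1 ((hQmem _).mpr ⟨r, h, rfl⟩)
  -- every nonzero element of L with prime annihilator has annihilator q
  have Hp : ∀ w : L, w ≠ 0 → Ideal.IsPrime (LinearMap.ker (LinearMap.toSpanSingleton R L w)) →
      LinearMap.ker (LinearMap.toSpanSingleton R L w) = q := by
    intro w hw hprime
    obtain ⟨z, rfl⟩ := A.mkQ_surjective w
    have hzA : z ∉ A := by
      intro h
      exact hw (by rw [Submodule.mkQ_apply, Submodule.Quotient.mk_eq_zero]; exact h)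
    -- the bigger submodule A ⊔ R∙z leaves the family
    have hWnotfam : A ⊔ (R ∙ z) ∉ fam := by
      intro hWfam
      have hlt : A < A ⊔ (R ∙ z) := by
        refine lt_of_le_of_ne le_sup_left (fun h => hzA ?_)
        rw [h]
        exact Submodule.mem_sup_right (Submodule.mem_span_singleton_self z)
      exact hAmax _ hWfam hlt
    have hnotle : ¬(A ⊔ (R ∙ z)) ⊓ (R ∙ x) ≤ Q := by
      intro h
      exact hWnotfam ⟨hAfam.1.trans le_sup_left, h⟩
    obtain ⟨u, hu, hunotQ⟩ := SetLike.not_le_iff_exists.mp hnotle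
    obtain ⟨s, hsx⟩ := Submodule.mem_span_singleton.mp hu.2
    have hsq : s ∉ q := by
      intro h
      exact hunotQ ((hQmem u).mpr ⟨s, h, hsx⟩)
    obtain ⟨a, ha, v, hv, hav⟩ := Submodule.mem_sup.mp hu.1
    obtain ⟨r, hrz⟩ := Submodule.mem_span_singleton.mp hv
    -- s • x̄ = r • w in L
    have key : s • A.mkQ x = r • A.mkQ z := by
      rw [← map_smul, ← map_smul, Submodule.mkQ_apply, Submodule.mkQ_apply,
        Submodule.Quotient.eq]
      rw [← hsx, ← hrz] at hav
      have : s • x - r • z = a := by rw [← hav]; abel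
      rw [this]
      exact ha
    have hsxne : s • A.mkQ x ≠ 0 := fun h => hsq ((hxbar s).mp h)
    have hrwne : r • A.mkQ z ≠ 0 := by rw [← key]; exact hsxne
    -- now prove the two inclusions
    ext c
    rw [LinearMap.mem_ker, LinearMap.toSpanSingleton_apply]
    constructor
    · intro hc
      have h1 : c • (s • A.mkQ x) = 0 := by
        rw [key, smul_comm, hc, smul_zero]
      rw [smul_smul] at h1
      have h2 : c * s ∈ q := (hxbar _).mp h1
      exact (hqprime.mem_or_mem h2).resolve_right hsq
    · intro hc
      have h1 : (c * r) • A.mkQ z = 0 := by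
        rw [mul_smul, ← key, smul_smul, mul_comm, ← smul_smul, (hxbar c).mpr hc, smul_zero]
      have h2 : c * r ∈ LinearMap.ker (LinearMap.toSpanSingleton R L (A.mkQ z)) := by
        rw [LinearMap.mem_ker, LinearMap.toSpanSingleton_apply]
        exact h1
      refine (hprime.mem_or_mem h2).resolve_right (fun hr => hrwne ?_)
      rw [LinearMap.mem_ker, LinearMap.toSpanSingleton_apply] at hr
      exact hr
  -- L is in X
  have hXL : X L := aux_copr_mem X hiso hsub hext q hqprime N hXN y hy L Hp
  -- by the Serre property, L is in S
  have hXA : X ↥A := hsub M A hXM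
  have hSL : S L := ((hSerre ↥A M L A.subtype A.mkQ (Submodule.injective_subtype A)
    A.mkQ_surjective (LinearMap.exact_subtype_mkQ A) hXA hXM hXL).mp hSM).2
  refine ⟨L, inferInstance, inferInstance, hSL, isAssociatedPrime_iff.mpr ⟨hqprime, A.mkQ x, ?_⟩⟩
  ext r
  rw [Submodule.mem_colon_singleton, Submodule.mem_bot]
  exact ((hxbar r).symm : _)
end

section
/- Let R be a commutative noetherian ring and M a finitely generated R-module with Ass M = {p_1, ..., p_n}. Then there exist finitely generated quotients M ↠ M_i for 1 ≤ i ≤ n such that Ass M_i = {p_i} for each i and the canonical map M → ⊕_{i=1}^n M_i is injective. -/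
open Submodule

variable {R : Type*} [CommRing R] {M : Type*} [AddCommGroup M] [Module R M]

/-- Exact sequence lemma: `Ass M ⊆ Ass N ∪ Ass (M ⧸ N)`. -/
theorem ass_subset_union (N : Submodule R M) :
    associatedPrimes R M ⊆ associatedPrimes R N ∪ associatedPrimes R (M ⧸ N) := by
  exact associatedPrimes.subset_union_of_exact N.injective_subtype (LinearMap.exact_subtype_mkQ N)

/-- The associated primes of the cyclic module `R ∙ x` match those of `R ⧸ Ann(x)`. -/
theorem ass_span_singleton_eq (x : M) :
    associatedPrimes R ↥(R ∙ x) = associatedPrimes R (R ⧸ (R ∙ x).annihilator) := by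
  have hker : LinearMap.ker (LinearMap.toSpanSingleton R M x) = (R ∙ x).annihilator := by
    ext r
    rw [LinearMap.mem_ker, Submodule.mem_annihilator_span_singleton,
      LinearMap.toSpanSingleton_apply]
  have e : (R ⧸ (R ∙ x).annihilator) ≃ₗ[R] ↥(R ∙ x) :=
    (Submodule.quotEquivOfEq _ _ hker.symm).trans <|
      (LinearMap.quotKerEquivRange (LinearMap.toSpanSingleton R M x)).trans <|
        LinearEquiv.ofEq _ _ (LinearMap.span_singleton_eq_range R M x).symm
  exact (LinearEquiv.AssociatedPrimes.eq e).symm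

theorem exists_primary_decomposition_aux
    (R : Type) [CommRing R] [IsNoetherianRing R]
    (M : Type) [AddCommGroup M] [Module R M] [Module.Finite R M]
    (s : Finset (Ideal R)) (hs : associatedPrimes R M = ↑s) :
    ∃ N : {p : Ideal R // p ∈ s} → Submodule R M,
      (∀ p : {p : Ideal R // p ∈ s}, associatedPrimes R (M ⧸ N p) = {p.1}) ∧
      Function.Injective (LinearMap.pi fun p : {p : Ideal R // p ∈ s} => (N p).mkQ) := by
  have hM : IsNoetherian R M := inferInstance
  have key : ∀ p ∈ s, ∃ N : Submodule R M,
      p ∉ associatedPrimes R ↥N ∧ associatedPrimes R (M ⧸ N) = {p} := by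
    intro p hps
    obtain ⟨N, hN, hNmax⟩ := set_has_maximal_iff_noetherian.mpr hM
      {N : Submodule R M | p ∉ associatedPrimes R ↥N}
      ⟨⊥, by simp [associatedPrimes.eq_empty_of_subsingleton]⟩
    refine ⟨N, hN, ?_⟩
    have hsub : associatedPrimes R (M ⧸ N) ⊆ {p} := by
      intro q hq
      have hqp : q.IsPrime := hq.isPrime
      obtain ⟨-, xb, hxq⟩ := isAssociatedPrime_iff.mp hq
      by_contra hne
      rw [Set.mem_singleton_iff] at hne
      obtain ⟨x, rfl⟩ := N.mkQ_surjective xb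
      have hxN : x ∉ N := by
        intro hxN
        apply hqp.ne_top
        have h0 : N.mkQ x = 0 := (Submodule.Quotient.mk_eq_zero N).mpr hxN
        rw [hxq, Submodule.mkQ_apply] at *
        rw [h0, Submodule.colon_singleton_zero]
      set N' : Submodule R M := N ⊔ R ∙ x with hN'def
      set f : ↥N' →ₗ[R] M ⧸ N := N.mkQ ∘ₗ N'.subtype with hfdef
      have hkerf : LinearMap.ker f = Submodule.comap N'.subtype N := by
        ext y; simp [hfdef, Submodule.Quotient.mk_eq_zero]
      have hrangef : LinearMap.range f = R ∙ (N.mkQ x) := by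
        rw [hfdef, LinearMap.range_comp, Submodule.range_subtype, hN'def, Submodule.map_sup]
        rw [show Submodule.map N.mkQ N = ⊥ by
          rw [← le_bot_iff, Submodule.map_le_iff_le_comap]
          intro y hy; simp [Submodule.Quotient.mk_eq_zero, hy]]
        rw [Submodule.map_span, Set.image_singleton, bot_sup_eq, Submodule.mkQ_apply]
      have hassN' : associatedPrimes R ↥N' ⊆ associatedPrimes R ↥N ∪ {q} := by
        intro r hr
        rcases ass_subset_union (Submodule.comap N'.subtype N) hr with h | h
        · left
          exact (LinearEquiv.AssociatedPrimes.eq (Submodule.comapSubtypeEquivOfLe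
            (le_sup_left : N ≤ N'))) ▸ h
        · right
          have : associatedPrimes R (↥N' ⧸ Submodule.comap N'.subtype N)
              = associatedPrimes R (R ⧸ q) := by
            rw [← hkerf,
              LinearEquiv.AssociatedPrimes.eq (LinearMap.quotKerEquivRange f),
              LinearEquiv.AssociatedPrimes.eq (LinearEquiv.ofEq _ _ hrangef),
              ass_span_singleton_eq, ← Submodule.bot_colon', ← hxq]
          rw [this, associatedPrimes.eq_singleton_of_isPrimary hqp.isPrimary,
            hqp.radical] at h
          exact h
      have hpN' : p ∉ associatedPrimes R ↥N' := by
        intro hp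
        rcases hassN' hp with h | h
        · exact hN h
        · exact hne (Set.mem_singleton_iff.mp h).symm
      exact hNmax N' hpN' (lt_of_le_of_ne le_sup_left (by
        intro h
        exact hxN (h ▸ Submodule.mem_sup_right (Submodule.mem_span_singleton_self x))))
    have hpmem : p ∈ associatedPrimes R (M ⧸ N) := by
      have hpM : p ∈ associatedPrimes R M := by rw [hs]; exact_mod_cast hps
      rcases ass_subset_union N hpM with h | h
      · exact absurd h hN
      · exact h
    exact le_antisymm hsub (by simpa using hpmem)
  choose N hN1 hN2 using key
  refine ⟨fun p => N p.1 p.2, fun p => hN2 p.1 p.2, ?_⟩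
  rw [← LinearMap.ker_eq_bot, LinearMap.ker_pi]
  simp only [Submodule.ker_mkQ]
  set K : Submodule R M := ⨅ p : {p : Ideal R // p ∈ s}, N p.1 p.2 with hK
  by_contra hKne
  have : Nontrivial ↥K := Submodule.nontrivial_iff_ne_bot.mpr hKne
  obtain ⟨q, hq⟩ := associatedPrimes.nonempty R ↥K
  have hqs : q ∈ s := by
    have : q ∈ associatedPrimes R M :=
      associatedPrimes.subset_of_injective K.injective_subtype hq
    rwa [hs] at this; 
  have hKle : K ≤ N q hqs := iInf_le (fun p : {p : Ideal R // p ∈ s} => N p.1 p.2) ⟨q, hqs⟩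
  exact hN1 q hqs (associatedPrimes.subset_of_injective
    (Submodule.inclusion_injective hKle) hq)


/-- Primary decomposition, module form: let `R` be commutative noetherian and `M` a
finitely generated `R`-module whose set of associated primes is the finite set `s`. Then
there are quotients `M ↠ M ⧸ N p` (for `p ∈ s`) with `Ass (M ⧸ N p) = {p}` such that the
canonical map `M → ⊕_{p ∈ s} M ⧸ N p` is injective. -/
theorem exists_primary_decomposition
    (R : Type) [CommRing R] [IsNoetherianRing R]
    (M : Type) [AddCommGroup M] [Module R M] [Module.Finite R M]
    (s : Finset (Ideal R)) (hs : associatedPrimes R M = ↑s) :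
    ∃ N : {p : Ideal R // p ∈ s} → Submodule R M,
      (∀ p : {p : Ideal R // p ∈ s}, associatedPrimes R (M ⧸ N p) = {p.1}) ∧
      Function.Injective (LinearMap.pi fun p : {p : Ideal R // p ∈ s} => (N p).mkQ) :=
  exists_primary_decomposition_aux R M s hs
end
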